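/- arXiv:1609.02865 — 3 statements merged into one kernel-verified Lean document; each statement's English description precedes it below -/
import Mathlib

section
/- Let S be a non-discrete locally compact semitopological polycyclic monoid with generating set Λ, and let U₀ be a compact neighborhood of the zero 0 in S. Then U₀ has infinite intersection with some Green R-class of S. -/
/-- A polycyclic monoid: an inverse monoid `S` with a two-sided zero `0 ≠ 1`
(encoded via `MonoidWithZero`), with inversion `inv` (the unique inverse
in the sense of inverse semigroups), generated (as a semigroup) by a set `Λ`
with `x * inv x = 1` for `x ∈ Λ` and `x * inv y = 0` for distinct `x, y ∈ Λ`. -/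
structure IsPolycyclicMonoid (S : Type*) [MonoidWithZero S] (inv : S → S) (Λ : Set S) : Prop where
  inv_inverse : ∀ a : S, a * inv a * a = a ∧ inv a * a * inv a = inv a
  inv_unique : ∀ a b : S, a * b * a = a → b * a * b = b → b = inv a
  zero_ne_one : (0 : S) ≠ 1
  gen_unit : ∀ x ∈ Λ, x * inv x = 1
  gen_zero : ∀ x ∈ Λ, ∀ y ∈ Λ, x ≠ y → x * inv y = 0
  generates : Subsemigroup.closure (Λ ∪ inv '' Λ) = ⊤

/-- The Green `R`-class of `u`: the set of `x` with `xS = uS`. -/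
def greenR {S : Type*} [Mul S] (u : S) : Set S :=
  {x | {t | ∃ s, t = x * s} = {t | ∃ s, t = u * s}}

namespace Stmt7Aux

variable {S : Type*} [MonoidWithZero S] {inv : S → S} {Λ : Set S}

/-- Product of a word (read left to right). -/
def PW (l : List S) : S := l.prod

/-- Product of the inverses of a word, in reverse order. -/
def QW (inv : S → S) (l : List S) : S := (l.reverse.map inv).prod

@[simp] lemma PW_nil : PW ([] : List S) = 1 := rfl

@[simp] lemma QW_nil : QW inv ([] : List S) = 1 := rfl

lemma PW_cons (c : S) (l : List S) : PW (c :: l) = c * PW l := List.prod_cons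

lemma PW_append (a b : List S) : PW (a ++ b) = PW a * PW b := List.prod_append

lemma PW_concat (l : List S) (c : S) : PW (l ++ [c]) = PW l * c := by
  rw [PW_append]; simp [PW]

lemma QW_append (a b : List S) : QW inv (a ++ b) = QW inv b * QW inv a := by
  unfold QW
  rw [List.reverse_append, List.map_append, List.prod_append]

lemma QW_concat (l : List S) (c : S) : QW inv (l ++ [c]) = inv c * QW inv l := by
  rw [QW_append]; simp [QW]

lemma QW_cons (c : S) (l : List S) : QW inv (c :: l) = QW inv l * inv c := by
  have : c :: l = [c] ++ l := rfl
  rw [this, QW_append]; simp [QW]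

section WithHS

variable (hS : IsPolycyclicMonoid S inv Λ)
include hS

lemma PQ_one : ∀ {l : List S}, (∀ c ∈ l, c ∈ Λ) → PW l * QW inv l = 1 := by
  intro l
  induction l with
  | nil => intro _; simp
  | cons c w ih =>
    intro hl
    have hc : c ∈ Λ := hl c List.mem_cons_self
    have hw : ∀ d ∈ w, d ∈ Λ := fun d hd => hl d (List.mem_cons_of_mem c hd)
    rw [PW_cons, QW_cons, mul_assoc, ← mul_assoc (PW w), ih hw, one_mul,
      hS.gen_unit c hc]

/-- The fundamental "trichotomy" for products `P a * Q b`. -/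
lemma tri : ∀ (n : ℕ) (a b : List S), (∀ c ∈ a, c ∈ Λ) → (∀ c ∈ b, c ∈ Λ) →
    a.length ≤ n →
    PW a * QW inv b = 0 ∨
    (∃ r, a = r ++ b ∧ PW a * QW inv b = PW r) ∨
    (∃ r, b = r ++ a ∧ PW a * QW inv b = QW inv r) := by
  intro n
  induction n with
  | zero =>
    intro a b _ _ hlen
    have ha : a = [] := List.eq_nil_of_length_eq_zero (Nat.le_zero.mp hlen)
    subst ha
    exact Or.inr (Or.inr ⟨b, by simp, by simp⟩)
  | succ n ih =>
    intro a b ha hb hlen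
    rcases List.eq_nil_or_concat' a with rfl | ⟨a', c, rfl⟩
    · exact Or.inr (Or.inr ⟨b, by simp, by simp⟩)
    rcases List.eq_nil_or_concat' b with rfl | ⟨b', d, rfl⟩
    · exact Or.inr (Or.inl ⟨a' ++ [c], by simp, by simp⟩)
    have hc : c ∈ Λ := ha c (by simp)
    have hd : d ∈ Λ := hb d (by simp)
    have ha' : ∀ e ∈ a', e ∈ Λ := fun e he => ha e (by simp [he])
    have hb' : ∀ e ∈ b', e ∈ Λ := fun e he => hb e (by simp [he])
    have key : PW (a' ++ [c]) * QW inv (b' ++ [d])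
        = PW a' * ((c * inv d) * QW inv b') := by
      rw [PW_concat, QW_concat, mul_assoc, ← mul_assoc c]
    have hlen' : a'.length ≤ n := by
      have := hlen; simp only [List.length_append, List.length_cons] at this
      omega
    by_cases hcd : c = d
    · subst hcd
      rw [hS.gen_unit c hc, one_mul] at key
      rcases ih a' b' ha' hb' hlen' with h0 | ⟨r, hr, hv⟩ | ⟨r, hr, hv⟩
      · exact Or.inl (by rw [key, h0])
      · refine Or.inr (Or.inl ⟨r, ?_, ?_⟩)
        · rw [hr, List.append_assoc]
        · rw [key, hv]
      · refine Or.inr (Or.inr ⟨r, ?_, ?_⟩)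
        · rw [hr, List.append_assoc]
        · rw [key, hv]
    · rw [hS.gen_zero c hc d hd hcd, zero_mul, mul_zero] at key
      exact Or.inl key

lemma tri' (a b : List S) (ha : ∀ c ∈ a, c ∈ Λ) (hb : ∀ c ∈ b, c ∈ Λ) :
    PW a * QW inv b = 0 ∨
    (∃ r, a = r ++ b ∧ PW a * QW inv b = PW r) ∨
    (∃ r, b = r ++ a ∧ PW a * QW inv b = QW inv r) :=
  tri hS a.length a b ha hb le_rfl

/-- Normal form existence predicate. -/
def NF (inv : S → S) (Λ : Set S) (s : S) : Prop :=
  s = 0 ∨ ∃ u v, (∀ c ∈ u, c ∈ Λ) ∧ (∀ c ∈ v, c ∈ Λ) ∧ s = QW inv u * PW v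

lemma nf_mul {a b : S} (ha : NF inv Λ a) (hb : NF inv Λ b) : NF inv Λ (a * b) := by
  rcases ha with rfl | ⟨u, v, hu, hv, rfl⟩
  · exact Or.inl (zero_mul b)
  rcases hb with rfl | ⟨w, z, hw, hz, rfl⟩
  · exact Or.inl (mul_zero _)
  have key : (QW inv u * PW v) * (QW inv w * PW z)
      = QW inv u * ((PW v * QW inv w) * PW z) := by
    simp only [mul_assoc]
  rcases tri' hS v w hv hw with h0 | ⟨r, hr, hval⟩ | ⟨r, hr, hval⟩
  · exact Or.inl (by rw [key, h0, zero_mul, mul_zero])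
  · refine Or.inr ⟨u, r ++ z, hu, ?_, ?_⟩
    · intro e he
      rcases List.mem_append.mp he with he | he
      · exact hv e (by rw [hr]; exact List.mem_append.mpr (Or.inl he))
      · exact hz e he
    · rw [key, hval, ← PW_append]
  · refine Or.inr ⟨r ++ u, z, ?_, hz, ?_⟩
    · intro e he
      rcases List.mem_append.mp he with he | he
      · exact hw e (by rw [hr]; exact List.mem_append.mpr (Or.inl he))
      · exact hu e he
    · rw [key, hval, QW_append, mul_assoc]

lemma nf_all : ∀ s : S, NF inv Λ s := by
  intro s
  have hs : s ∈ Subsemigroup.closure (Λ ∪ inv '' Λ) := by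
    rw [hS.generates]; exact Subsemigroup.mem_top s
  induction hs using Subsemigroup.closure_induction with
  | mem g hg =>
    rcases hg with hg | ⟨c, hc, rfl⟩
    · refine Or.inr ⟨[], [g], by simp, by simpa using hg, ?_⟩
      simp [PW, QW]
    · refine Or.inr ⟨[c], [], by simpa using hc, by simp, ?_⟩
      simp [PW, QW]
  | mul a b _ _ iha ihb => exact nf_mul hS iha ihb

lemma qp_ne_zero {u v : List S} (hu : ∀ c ∈ u, c ∈ Λ) (hv : ∀ c ∈ v, c ∈ Λ) :
    QW inv u * PW v ≠ 0 := by
  intro h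
  have : PW u * (QW inv u * PW v) * QW inv v = 0 := by rw [h, mul_zero, zero_mul]
  rw [← mul_assoc, PQ_one hS hu, one_mul, PQ_one hS hv] at this
  exact hS.zero_ne_one this.symm

lemma two_letters : ∃ x, x ∈ Λ ∧ ∃ y, y ∈ Λ ∧ x ≠ y := by
  by_contra h
  push_neg at h
  have h0top : (0 : S) ∈ Subsemigroup.closure (Λ ∪ inv '' Λ) := by
    rw [hS.generates]; exact Subsemigroup.mem_top 0
  rcases Λ.eq_empty_or_nonempty with rfl | ⟨x, hx⟩
  · rw [Set.image_empty, Set.empty_union, Subsemigroup.closure_empty] at h0top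
    exact Subsemigroup.notMem_bot h0top
  · -- all elements of Λ equal x
    have hall : ∀ c ∈ Λ, c = x := fun c hc => h c hc x hx
    -- replicate trichotomy
    have reptri : ∀ (c b : ℕ),
        PW (List.replicate b x) * QW inv (List.replicate c x)
          = PW (List.replicate (b - c) x) ∨
        PW (List.replicate b x) * QW inv (List.replicate c x)
          = QW inv (List.replicate (c - b) x) := by
      intro c
      induction c with
      | zero => intro b; left; simp
      | succ c ih =>
        intro b
        cases b with
        | zero => right; simp
        | succ b =>
          rw [List.replicate_succ' (n := b) (a := x), List.replicate_succ' (n := c) (a := x), PW_concat,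
            QW_concat, mul_assoc, ← mul_assoc x, hS.gen_unit x hx, one_mul,
            Nat.succ_sub_succ, Nat.succ_sub_succ]
          exact ih b
    have M : ∀ s ∈ Subsemigroup.closure (Λ ∪ inv '' Λ),
        ∃ a b, s = QW inv (List.replicate a x) * PW (List.replicate b x) := by
      intro s hs
      induction hs using Subsemigroup.closure_induction with
      | mem g hg =>
        rcases hg with hg | ⟨c, hc, rfl⟩
        · refine ⟨0, 1, ?_⟩
          rw [hall g hg]
          simp [PW, QW]
        · refine ⟨1, 0, ?_⟩
          rw [hall c hc]
          simp [PW, QW]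
      | mul a b _ _ iha ihb =>
        obtain ⟨a1, b1, rfl⟩ := iha
        obtain ⟨a2, b2, rfl⟩ := ihb
        have key : (QW inv (List.replicate a1 x) * PW (List.replicate b1 x)) *
            (QW inv (List.replicate a2 x) * PW (List.replicate b2 x))
            = QW inv (List.replicate a1 x) *
              ((PW (List.replicate b1 x) * QW inv (List.replicate a2 x)) *
                PW (List.replicate b2 x)) := by
          simp only [mul_assoc]
        rcases reptri a2 b1 with hv | hv
        · refine ⟨a1, b1 - a2 + b2, ?_⟩
          rw [key, hv, ← PW_append, ← List.replicate_add]
        · refine ⟨a2 - b1 + a1, b2, ?_⟩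
          rw [key, hv, ← mul_assoc, ← QW_append, ← List.replicate_add]
    obtain ⟨a, b, hab⟩ := M 0 h0top
    have hrep : ∀ n, ∀ c ∈ List.replicate n x, c ∈ Λ := by
      intro n c hc; rw [List.eq_of_mem_replicate hc]; exact hx
    exact qp_ne_zero hS (hrep a) (hrep b) hab.symm

end WithHS

section TwoLetters

variable (hS : IsPolycyclicMonoid S inv Λ) {x y : S}
variable (hx : x ∈ Λ) (hy : y ∈ Λ) (hxy : x ≠ y)
include hS hx hy hxy

/-- `P α = 1` implies `α = []`. -/
lemma p_eq_one {α : List S} (hα : ∀ c ∈ α, c ∈ Λ) (h : PW α = 1) : α = [] := by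
  rcases List.eq_nil_or_concat' α with rfl | ⟨α', c, rfl⟩
  · rfl
  exfalso
  have hc : c ∈ Λ := hα c (by simp)
  rw [PW_concat] at h
  have h2 : PW α' = inv c := by
    have := congrArg (· * inv c) h
    rw [mul_assoc, hS.gen_unit c hc, mul_one, one_mul] at this
    exact this
  have h3 : inv c * c = 1 := by rw [← h2]; exact h
  obtain ⟨d, hd, hdc⟩ : ∃ d, d ∈ Λ ∧ d ≠ c := by
    by_cases hcx : c = x
    · exact ⟨y, hy, by rw [hcx]; exact fun hyx => hxy hyx.symm⟩
    · exact ⟨x, hx, fun hxc => hcx hxc.symm⟩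
  have hd0 : d = 0 := by
    have : d * (inv c * c) = d := by rw [h3, mul_one]
    rw [← mul_assoc, hS.gen_zero d hd c hc hdc, zero_mul] at this
    exact this.symm
  have : (1 : S) = 0 := by
    rw [← hS.gen_unit d hd, hd0, zero_mul]
  exact hS.zero_ne_one this.symm

/-- `Q β = 1` implies `β = []`. -/
lemma q_eq_one {β : List S} (hβ : ∀ c ∈ β, c ∈ Λ) (h : QW inv β = 1) : β = [] := by
  rcases List.eq_nil_or_concat' β with rfl | ⟨β', c, rfl⟩
  · rfl
  exfalso
  have hc : c ∈ Λ := hβ c (by simp)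
  rw [QW_concat] at h
  have h2 : QW inv β' = c := by
    have := congrArg (c * ·) h
    rw [← mul_assoc, hS.gen_unit c hc, one_mul, mul_one] at this
    exact this
  have h3 : inv c * c = 1 := by rw [← h2] at h ⊢; exact h
  obtain ⟨d, hd, hdc⟩ : ∃ d, d ∈ Λ ∧ d ≠ c := by
    by_cases hcx : c = x
    · exact ⟨y, hy, by rw [hcx]; exact fun hyx => hxy hyx.symm⟩
    · exact ⟨x, hx, fun hxc => hcx hxc.symm⟩
  have hd0 : d = 0 := by
    have : d * (inv c * c) = d := by rw [h3, mul_one]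
    rw [← mul_assoc, hS.gen_zero d hd c hc hdc, zero_mul] at this
    exact this.symm
  have : (1 : S) = 0 := by
    rw [← hS.gen_unit d hd, hd0, zero_mul]
  exact hS.zero_ne_one this.symm

/-- `Q v * P v = 1` implies `v = []`. -/
lemma qp_eq_one_same {v : List S} (hv : ∀ c ∈ v, c ∈ Λ) (h : QW inv v * PW v = 1) :
    v = [] := by
  rcases List.eq_nil_or_concat' v with rfl | ⟨v', d, rfl⟩
  · rfl
  exfalso
  have hd : d ∈ Λ := hv d (by simp)
  obtain ⟨g, hg, hgd⟩ : ∃ g, g ∈ Λ ∧ g ≠ d := by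
    by_cases hdx : d = x
    · exact ⟨y, hy, by rw [hdx]; exact fun h' => hxy h'.symm⟩
    · exact ⟨x, hx, fun h' => hdx h'.symm⟩
  have hg0 : g = 0 := by
    have h1 : g * (QW inv (v' ++ [d]) * PW (v' ++ [d])) = g := by rw [h, mul_one]
    rw [QW_concat, ← mul_assoc, ← mul_assoc, hS.gen_zero g hg d hd hgd,
      zero_mul, zero_mul] at h1
    exact h1.symm
  have : (1 : S) = 0 := by rw [← hS.gen_unit g hg, hg0, zero_mul]
  exact hS.zero_ne_one this.symm

/-- `Q α * P β = 1` implies `α = β = []`. -/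
lemma qp_eq_one {α β : List S} (hα : ∀ c ∈ α, c ∈ Λ) (hβ : ∀ c ∈ β, c ∈ Λ)
    (h : QW inv α * PW β = 1) : α = [] ∧ β = [] := by
  have hqq : QW inv α = QW inv β := by
    have := congrArg (· * QW inv β) h
    rw [mul_assoc, PQ_one hS hβ, mul_one, one_mul] at this
    exact this
  have hβnil : β = [] := qp_eq_one_same hS hx hy hxy hβ (by rw [← hqq]; exact h)
  subst hβnil
  simp only [PW_nil, mul_one] at h
  exact ⟨q_eq_one hS hx hy hxy hα h, rfl⟩

/-- `P α * Q β = 1` implies `α = β`. -/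
lemma pq_eq_one {α β : List S} (hα : ∀ c ∈ α, c ∈ Λ) (hβ : ∀ c ∈ β, c ∈ Λ)
    (h : PW α * QW inv β = 1) : α = β := by
  rcases tri' hS α β hα hβ with h0 | ⟨r, hr, hv⟩ | ⟨r, hr, hv⟩
  · exact absurd (h0 ▸ h) (fun h' => hS.zero_ne_one h')
  · have : r = [] := p_eq_one hS hx hy hxy
      (fun c hc => hα c (by rw [hr]; exact List.mem_append.mpr (Or.inl hc)))
      (by rw [← hv]; exact h)
    rw [hr, this, List.nil_append]
  · have : r = [] := q_eq_one hS hx hy hxy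
      (fun c hc => hβ c (by rw [hr]; exact List.mem_append.mpr (Or.inl hc)))
      (by rw [← hv]; exact h)
    rw [hr, this, List.nil_append]

end TwoLetters


@[simp] lemma QW_singleton (c : S) : QW inv [c] = inv c := by simp [QW]

section More

variable (hS : IsPolycyclicMonoid S inv Λ) {x y : S}
variable (hx : x ∈ Λ) (hy : y ∈ Λ) (hxy : x ≠ y)
include hS

lemma rep_mem {t : S} (ht : t ∈ Λ) (k : ℕ) : ∀ c ∈ List.replicate k t, c ∈ Λ := by
  intro c hc; rw [List.eq_of_mem_replicate hc]; exact ht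

/-- Shape of `(Q u * P v) * Q (t^k)` for large `k`. -/
lemma shapeA {t : S} (ht : t ∈ Λ) : ∀ (n : ℕ) (v u : List S) (k : ℕ),
    (∀ c ∈ u, c ∈ Λ) → (∀ c ∈ v, c ∈ Λ) → v.length ≤ n → v.length < k →
    (QW inv u * PW v) * QW inv (List.replicate k t) = 0 ∨
    ∃ i, 1 ≤ i ∧ (QW inv u * PW v) * QW inv (List.replicate k t)
        = QW inv (List.replicate i t ++ u) := by
  intro n
  induction n with
  | zero =>
    intro v u k hu hv hlen hk
    have hvnil : v = [] := List.eq_nil_of_length_eq_zero (Nat.le_zero.mp hlen)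
    subst hvnil
    refine Or.inr ⟨k, by omega, ?_⟩
    rw [PW_nil, mul_one, QW_append]
  | succ n ih =>
    intro v u k hu hv hlen hk
    rcases List.eq_nil_or_concat' v with rfl | ⟨v₀, d, rfl⟩
    · refine Or.inr ⟨k, by simp at hk; omega, ?_⟩
      rw [PW_nil, mul_one, QW_append]
    · have hd : d ∈ Λ := hv d (by simp)
      have hv₀ : ∀ c ∈ v₀, c ∈ Λ := fun c hc => hv c (by simp [hc])
      obtain ⟨k', rfl⟩ : ∃ k', k = k' + 1 := ⟨k - 1, by omega⟩
      have e1 : (QW inv u * PW (v₀ ++ [d])) * QW inv (List.replicate (k' + 1) t)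
          = (QW inv u * PW v₀) * ((d * inv t) * QW inv (List.replicate k' t)) := by
        rw [List.replicate_succ' (n := k') (a := t), QW_concat, PW_concat]
        simp only [mul_assoc]
      by_cases hdt : d = t
      · subst hdt
        rw [hS.gen_unit d hd, one_mul] at e1
        have hlen' : v₀.length ≤ n := by
          simp only [List.length_append, List.length_cons, List.length_nil] at hlen
          omega
        have hk' : v₀.length < k' := by
          simp only [List.length_append, List.length_cons, List.length_nil] at hk
          omega
        rw [e1]
        exact ih v₀ u k' hu hv₀ hlen' hk'
      · rw [hS.gen_zero d hd t ht hdt, zero_mul, mul_zero] at e1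
        exact Or.inl e1

include hx hy hxy

lemma headclash {u u' : List S} (hu : ∀ c ∈ u, c ∈ Λ) (hu' : ∀ c ∈ u', c ∈ Λ)
    {i j : ℕ} (hi : 1 ≤ i) (hj : 1 ≤ j)
    (h : QW inv (List.replicate i x ++ u) = QW inv (List.replicate j y ++ u')) :
    False := by
  have hgood : ∀ c ∈ List.replicate i x ++ u, c ∈ Λ := by
    intro c hc
    rcases List.mem_append.mp hc with hc | hc
    · rw [List.eq_of_mem_replicate hc]; exact hx
    · exact hu c hc
  have hgood' : ∀ c ∈ List.replicate j y ++ u', c ∈ Λ := by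
    intro c hc
    rcases List.mem_append.mp hc with hc | hc
    · rw [List.eq_of_mem_replicate hc]; exact hy
    · exact hu' c hc
  have h1 : PW (List.replicate i x ++ u) * QW inv (List.replicate j y ++ u') = 1 := by
    rw [← h]; exact PQ_one hS hgood
  have h2 := pq_eq_one hS hx hy hxy hgood hgood' h1
  obtain ⟨i', rfl⟩ : ∃ i', i = i' + 1 := ⟨i - 1, by omega⟩
  obtain ⟨j', rfl⟩ : ∃ j', j = j' + 1 := ⟨j - 1, by omega⟩
  rw [List.replicate_succ, List.replicate_succ, List.cons_append, List.cons_append] at h2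
  exact hxy (List.head_eq_of_cons_eq h2)

omit hx hy hxy

lemma green_mem {v : List S} (hv : ∀ c ∈ v, c ∈ Λ) (s : S) : s * PW v ∈ greenR s := by
  show {t | ∃ r, t = (s * PW v) * r} = {t | ∃ r, t = s * r}
  ext t
  simp only [Set.mem_setOf_eq]
  constructor
  · rintro ⟨r, rfl⟩
    exact ⟨PW v * r, by rw [mul_assoc]⟩
  · rintro ⟨r, rfl⟩
    refine ⟨QW inv v * r, ?_⟩
    rw [mul_assoc, ← mul_assoc (PW v), PQ_one hS hv, one_mul]

include hx hy hxy

lemma orb_inj {s : S} {u v : List S} (hu : ∀ c ∈ u, c ∈ Λ) (hv : ∀ c ∈ v, c ∈ Λ)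
    (hs : s = QW inv u * PW v) {t : S} (ht : t ∈ Λ) :
    Function.Injective (fun k => s * PW (List.replicate k t)) := by
  suffices hlt : ∀ j k, j < k → s * PW (List.replicate j t) ≠ s * PW (List.replicate k t) by
    intro a b hab
    rcases lt_trichotomy a b with h | h | h
    · exact absurd hab (hlt a b h)
    · exact h
    · exact absurd hab.symm (hlt b a h)
  intro j k hjk heq
  have h1 : s = s * PW (List.replicate (k - j) t) := by
    have e : s * PW (List.replicate j t) * QW inv (List.replicate j t) = s := by
      rw [mul_assoc, PQ_one hS (rep_mem hS ht j), mul_one]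
    calc s = s * PW (List.replicate j t) * QW inv (List.replicate j t) := e.symm
      _ = s * PW (List.replicate k t) * QW inv (List.replicate j t) := by rw [heq]
      _ = s * PW (List.replicate (k - j) t) := by
          have e2 : PW (List.replicate k t)
              = PW (List.replicate (k - j) t) * PW (List.replicate j t) := by
            rw [← PW_append, ← List.replicate_add, Nat.sub_add_cancel hjk.le]
          rw [e2]
          simp only [mul_assoc]
          rw [PQ_one hS (rep_mem hS ht j), mul_one]
  set d := k - j with hd
  have hd1 : 1 ≤ d := by omega
  have hpow : ∀ n, s = s * PW (List.replicate (n * d) t) := by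
    intro n
    induction n with
    | zero => simp
    | succ n ihn =>
      have hnd : (n + 1) * d = n * d + d := by ring
      rw [hnd, List.replicate_add, PW_append, ← mul_assoc, ← ihn, ← h1]
  set N := (v.length + 1) * d with hN
  have hNv : v.length < N := by
    have : v.length + 1 ≤ (v.length + 1) * d := Nat.le_mul_of_pos_right _ (by omega)
    omega
  have hsN : s * QW inv (List.replicate N t) = s := by
    conv_lhs => rw [hpow (v.length + 1)]
    rw [mul_assoc, PQ_one hS (rep_mem hS ht N), mul_one]
  rcases shapeA hS ht v.length v u N hu hv le_rfl hNv with h0 | ⟨i, hi, hval⟩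
  · apply qp_ne_zero hS hu hv
    rw [← hs, ← hsN, hs, h0]
  · have hseq : s = QW inv (List.replicate i t ++ u) := by
      rw [← hsN, hs, hval]
    have hgood : ∀ c ∈ List.replicate i t ++ u, c ∈ Λ := by
      intro c hc
      rcases List.mem_append.mp hc with hc | hc
      · rw [List.eq_of_mem_replicate hc]; exact ht
      · exact hu c hc
    have hgoodv : ∀ c ∈ List.replicate i t ++ v, c ∈ Λ := by
      intro c hc
      rcases List.mem_append.mp hc with hc | hc
      · rw [List.eq_of_mem_replicate hc]; exact ht
      · exact hv c hc
    have h2 : PW (List.replicate i t ++ u) * (QW inv u * PW v)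
        = PW (List.replicate i t ++ v) := by
      rw [PW_append, PW_append, mul_assoc, ← mul_assoc (PW u), PQ_one hS hu, one_mul]
    have h3 : PW (List.replicate i t ++ v) = 1 := by
      calc PW (List.replicate i t ++ v)
          = PW (List.replicate i t ++ u) * (QW inv u * PW v) := h2.symm
        _ = PW (List.replicate i t ++ u) * QW inv (List.replicate i t ++ u) := by
            rw [← hs, hseq]
        _ = 1 := PQ_one hS hgood
    have h4 := p_eq_one hS hx hy hxy hgoodv h3
    rcases List.append_eq_nil_iff.mp h4 with ⟨hrep, -⟩
    have : i = 0 := by simpa using congrArg List.length hrep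
    omega

/-- An element satisfying both nonvanishing conditions is `1`. -/
lemma star_char {s : S} (hxs : x * s * inv x ≠ 0) (hys : y * s * inv y ≠ 0) :
    s = 1 := by
  rcases nf_all hS s with rfl | ⟨w, z, hw, hz, rfl⟩
  · exact absurd (by rw [mul_zero, zero_mul]) hxs
  have hwnil : w = [] := by
    rcases List.eq_nil_or_concat' w with rfl | ⟨w', g, rfl⟩
    · rfl
    exfalso
    have hg : g ∈ Λ := hw g (by simp)
    by_cases hgx : g = x
    · by_cases hgy : g = y
      · exact hxy (hgx.symm.trans hgy)
      · apply hys
        have h0 : y * (QW inv (w' ++ [g]) * PW z) = 0 := by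
          rw [QW_concat, ← mul_assoc, ← mul_assoc,
            hS.gen_zero y hy g hg (fun h => hgy h.symm), zero_mul, zero_mul]
        rw [h0, zero_mul]
    · apply hxs
      have h0 : x * (QW inv (w' ++ [g]) * PW z) = 0 := by
        rw [QW_concat, ← mul_assoc, ← mul_assoc,
          hS.gen_zero x hx g hg (fun h => hgx h.symm), zero_mul, zero_mul]
      rw [h0, zero_mul]
  subst hwnil
  have hznil : z = [] := by
    rcases List.eq_nil_or_concat' z with rfl | ⟨z', d, rfl⟩
    · rfl
    exfalso
    have hd : d ∈ Λ := hz d (by simp)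
    by_cases hdx : d = x
    · by_cases hdy : d = y
      · exact hxy (hdx.symm.trans hdy)
      · apply hys
        rw [QW_nil, one_mul, PW_concat, ← mul_assoc, mul_assoc (y * PW z'),
          hS.gen_zero d hd y hy hdy, mul_zero]
    · apply hxs
      rw [QW_nil, one_mul, PW_concat, ← mul_assoc, mul_assoc (x * PW z'),
        hS.gen_zero d hd x hx hdx, mul_zero]
  subst hznil
  simp

end More

section Topology

variable (hS : IsPolycyclicMonoid S inv Λ) {x y : S}
variable (hx : x ∈ Λ) (hy : y ∈ Λ) (hxy : x ≠ y)
variable [TopologicalSpace S] [T2Space S]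
include hS hx hy hxy

lemma one_isolated (hl : ∀ a : S, Continuous (fun s : S => a * s))
    (hr : ∀ a : S, Continuous (fun s : S => s * a)) :
    IsOpen {s : S | s = 1} := by
  have hcont : ∀ a b : S, Continuous (fun s : S => a * s * b) :=
    fun a b => (hr b).comp (hl a)
  have heq : {s : S | s = 1}
      = ((fun s : S => x * s * inv x) ⁻¹' ({(0 : S)}ᶜ)) ∩
        ((fun s : S => y * s * inv y) ⁻¹' ({(0 : S)}ᶜ)) := by
    ext s
    simp only [Set.mem_setOf_eq, Set.mem_inter_iff, Set.mem_preimage,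
      Set.mem_compl_iff, Set.mem_singleton_iff]
    constructor
    · rintro rfl
      constructor
      · rw [mul_one, hS.gen_unit x hx]; exact fun h => hS.zero_ne_one h.symm
      · rw [mul_one, hS.gen_unit y hy]; exact fun h => hS.zero_ne_one h.symm
    · rintro ⟨h1, h2⟩
      exact star_char hS hx hy hxy h1 h2
  rw [heq]
  exact (isOpen_compl_singleton.preimage (hcont x (inv x))).inter
    (isOpen_compl_singleton.preimage (hcont y (inv y)))

lemma iso (hl : ∀ a : S, Continuous (fun s : S => a * s))
    (hr : ∀ a : S, Continuous (fun s : S => s * a)) :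
    ∀ (n : ℕ) (u v : List S), (∀ c ∈ u, c ∈ Λ) → (∀ c ∈ v, c ∈ Λ) →
      u.length + v.length ≤ n → IsOpen {s : S | s = QW inv u * PW v} := by
  intro n
  induction n with
  | zero =>
    intro u v hu hv hlen
    have hu0 : u = [] := List.eq_nil_of_length_eq_zero (by omega)
    have hv0 : v = [] := List.eq_nil_of_length_eq_zero (by omega)
    subst hu0; subst hv0
    have h1 : QW inv ([] : List S) * PW ([] : List S) = 1 := by simp
    rw [show {s : S | s = QW inv ([] : List S) * PW ([] : List S)}
        = {s : S | s = 1} by rw [h1]]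
    exact one_isolated hS hx hy hxy hl hr
  | succ n ih =>
    intro u v hu hv hlen
    rcases List.eq_nil_or_concat' v with rfl | ⟨v', c, rfl⟩
    · rcases List.eq_nil_or_concat' u with rfl | ⟨u₂, r, rfl⟩
      · have h1 : QW inv ([] : List S) * PW ([] : List S) = 1 := by simp
        rw [show {s : S | s = QW inv ([] : List S) * PW ([] : List S)}
            = {s : S | s = 1} by rw [h1]]
        exact one_isolated hS hx hy hxy hl hr
      · have hrΛ : r ∈ Λ := hu r (by simp)
        have hu₂ : ∀ e ∈ u₂, e ∈ Λ := fun e he => hu e (by simp [he])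
        have hIH : IsOpen {s : S | s = QW inv u₂ * PW ([] : List S)} := by
          apply ih u₂ [] hu₂ (by simp)
          simp only [List.length_append, List.length_cons, List.length_nil] at hlen ⊢
          omega
        have heq : {s : S | s = QW inv (u₂ ++ [r]) * PW ([] : List S)}
            = (fun s : S => r * s) ⁻¹' {s : S | s = QW inv u₂ * PW ([] : List S)} := by
          ext s
          simp only [Set.mem_setOf_eq, Set.mem_preimage]
          constructor
          · rintro rfl
            simp only [QW_concat, PW_nil, mul_one]
            rw [← mul_assoc, hS.gen_unit r hrΛ, one_mul]
          · intro h
            rcases nf_all hS s with rfl | ⟨w, z, hw, hz, rfl⟩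
            · exfalso
              apply qp_ne_zero hS hu₂ (by simp : ∀ c ∈ ([] : List S), c ∈ Λ)
              rw [← h, mul_zero]
            rcases List.eq_nil_or_concat' w with rfl | ⟨w₃, g, rfl⟩
            · exfalso
              have hzs : r * (QW inv ([] : List S) * PW z) = PW (r :: z) := by
                rw [QW_nil, one_mul, PW_cons]
              rw [hzs] at h
              have h2 : PW (u₂ ++ r :: z) = 1 := by
                rw [PW_append, h, ← mul_assoc, PQ_one hS hu₂, PW_nil, one_mul]
              have h3 := p_eq_one hS hx hy hxy
                (by intro e he
                    rcases List.mem_append.mp he with he | he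
                    · exact hu₂ e he
                    · rcases List.mem_cons.mp he with rfl | he
                      · exact hrΛ
                      · exact hz e he) h2
              simp at h3
            · have hg : g ∈ Λ := hw g (by simp)
              by_cases hgr : g = r
              · subst hgr
                have hrs : g * (QW inv (w₃ ++ [g]) * PW z) = QW inv w₃ * PW z := by
                  rw [QW_concat, ← mul_assoc, ← mul_assoc, hS.gen_unit g hg, one_mul]
                rw [hrs] at h
                rw [show QW inv (w₃ ++ [g]) * PW z = inv g * (QW inv w₃ * PW z) by
                  rw [QW_concat, mul_assoc], h, QW_concat, mul_assoc]
              · exfalso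
                apply qp_ne_zero hS hu₂ (by simp : ∀ c ∈ ([] : List S), c ∈ Λ)
                rw [← h, QW_concat, ← mul_assoc, ← mul_assoc,
                  hS.gen_zero r hrΛ g hg (fun hh => hgr hh.symm), zero_mul, zero_mul]
        rw [heq]
        exact hIH.preimage (hl r)
    · have hc : c ∈ Λ := hv c (by simp)
      have hv' : ∀ e ∈ v', e ∈ Λ := fun e he => hv e (by simp [he])
      rcases List.eq_nil_or_concat' u with rfl | ⟨u₂, r, rfl⟩
      · have hIH : IsOpen {s : S | s = QW inv ([] : List S) * PW v'} := by
          apply ih [] v' (by simp) hv'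
          simp only [List.length_append, List.length_cons, List.length_nil] at hlen ⊢
          omega
        have heq : {s : S | s = QW inv ([] : List S) * PW (v' ++ [c])}
            = (fun s : S => s * inv c) ⁻¹' {s : S | s = QW inv ([] : List S) * PW v'} := by
          ext s
          simp only [Set.mem_setOf_eq, Set.mem_preimage]
          constructor
          · rintro rfl
            simp only [QW_nil, one_mul, PW_concat]
            rw [mul_assoc, hS.gen_unit c hc, mul_one]
          · intro h
            rcases nf_all hS s with rfl | ⟨w, z, hw, hz, rfl⟩
            · exfalso
              exact qp_ne_zero hS (by simp : ∀ e ∈ ([] : List S), e ∈ Λ) hv'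
                (by rw [← h, zero_mul])
            rcases List.eq_nil_or_concat' z with rfl | ⟨z'', d, rfl⟩
            · exfalso
              have hform : (QW inv w * PW ([] : List S)) * inv c
                  = QW inv ([c] ++ w) := by
                rw [PW_nil, mul_one, QW_append, QW_singleton]
              rw [hform] at h
              have hcw : ∀ e ∈ [c] ++ w, e ∈ Λ := by
                intro e he
                rcases List.mem_append.mp he with he | he
                · rcases List.mem_singleton.mp he with rfl; exact hc
                · exact hw e he
              have h2 : PW (([c] ++ w) ++ v') = 1 := by
                calc PW (([c] ++ w) ++ v') = PW ([c] ++ w) * PW v' := PW_append _ _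
                  _ = PW ([c] ++ w) * (QW inv ([] : List S) * PW v') := by
                      rw [QW_nil, one_mul]
                  _ = PW ([c] ++ w) * QW inv ([c] ++ w) := by rw [← h]
                  _ = 1 := PQ_one hS hcw
              have h3 := p_eq_one hS hx hy hxy
                (by intro e he
                    rcases List.mem_append.mp he with he | he
                    · exact hcw e he
                    · exact hv' e he) h2
              simp at h3
            · have hd : d ∈ Λ := hz d (by simp)
              by_cases hdc : d = c
              · subst hdc
                have hform : (QW inv w * PW (z'' ++ [d])) * inv d
                    = QW inv w * PW z'' := by
                  simp only [PW_concat, mul_assoc]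
                  rw [hS.gen_unit d hd, mul_one]
                rw [hform] at h
                rw [show QW inv w * PW (z'' ++ [d]) = (QW inv w * PW z'') * d by
                  rw [PW_concat, mul_assoc], h, PW_concat, mul_assoc]
              · exfalso
                apply qp_ne_zero hS (by simp : ∀ e ∈ ([] : List S), e ∈ Λ) hv'
                rw [← h, PW_concat, mul_assoc, mul_assoc,
                  hS.gen_zero d hd c hc hdc, mul_zero, mul_zero]
        rw [heq]
        exact hIH.preimage (hr (inv c))
      · -- u = u₂ ++ [r], v = v' ++ [c]
        have hrΛ : r ∈ Λ := hu r (by simp)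
        have hu₂ : ∀ e ∈ u₂, e ∈ Λ := fun e he => hu e (by simp [he])
        have hIH1 : IsOpen {s : S | s = QW inv (u₂ ++ [r]) * PW v'} := by
          apply ih (u₂ ++ [r]) v' hu hv'
          simp only [List.length_append, List.length_cons] at hlen ⊢
          omega
        have hIH2 : IsOpen {s : S | s = QW inv u₂ * PW (v' ++ [c])} := by
          apply ih u₂ (v' ++ [c]) hu₂ hv
          simp only [List.length_append, List.length_cons] at hlen ⊢
          omega
        have heq : {s : S | s = QW inv (u₂ ++ [r]) * PW (v' ++ [c])}
            = (((fun s : S => s * inv c) ⁻¹' {s : S | s = QW inv (u₂ ++ [r]) * PW v'}) ∩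
              ((fun s : S => r * s) ⁻¹' {s : S | s = QW inv u₂ * PW (v' ++ [c])})) ∩
              {s : S | s = 1}ᶜ := by
          ext s
          simp only [Set.mem_setOf_eq, Set.mem_inter_iff, Set.mem_preimage,
            Set.mem_compl_iff]
          constructor
          · rintro rfl
            refine ⟨⟨?_, ?_⟩, ?_⟩
            · simp only [PW_concat, mul_assoc]
              rw [hS.gen_unit c hc, mul_one]
            · simp only [QW_concat, ← mul_assoc]
              rw [hS.gen_unit r hrΛ, one_mul]
            · intro h1
              obtain ⟨h1u, -⟩ := qp_eq_one hS hx hy hxy hu hv h1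
              simp at h1u
          · rintro ⟨⟨hρ, hlam⟩, hne1⟩
            rcases nf_all hS s with rfl | ⟨w, z, hw, hz, rfl⟩
            · exfalso
              exact qp_ne_zero hS hu hv' (by rw [← hρ, zero_mul])
            rcases List.eq_nil_or_concat' z with rfl | ⟨z'', d, rfl⟩
            · rcases List.eq_nil_or_concat' w with rfl | ⟨w₃, g, rfl⟩
              · exact absurd (by simp) hne1
              · have hg : g ∈ Λ := hw g (by simp)
                by_cases hgr : g = r
                · subst hgr
                  have hrs : g * (QW inv (w₃ ++ [g]) * PW ([] : List S))
                      = QW inv w₃ * PW ([] : List S) := by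
                    rw [QW_concat, ← mul_assoc, ← mul_assoc, hS.gen_unit g hg, one_mul]
                  rw [hrs] at hlam
                  rw [show QW inv (w₃ ++ [g]) * PW ([] : List S)
                      = inv g * (QW inv w₃ * PW ([] : List S)) by
                    rw [QW_concat, mul_assoc], hlam, QW_concat, mul_assoc]
                · exfalso
                  apply qp_ne_zero hS hu₂ hv
                  rw [← hlam, QW_concat, ← mul_assoc, ← mul_assoc,
                    hS.gen_zero r hrΛ g hg (fun hh => hgr hh.symm), zero_mul, zero_mul]
            · have hd : d ∈ Λ := hz d (by simp)
              by_cases hdc : d = c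
              · subst hdc
                have hform : (QW inv w * PW (z'' ++ [d])) * inv d
                    = QW inv w * PW z'' := by
                  simp only [PW_concat, mul_assoc]
                  rw [hS.gen_unit d hd, mul_one]
                rw [hform] at hρ
                rw [show QW inv w * PW (z'' ++ [d]) = (QW inv w * PW z'') * d by
                  rw [PW_concat, mul_assoc], hρ, PW_concat, mul_assoc]
              · exfalso
                apply qp_ne_zero hS hu hv'
                rw [← hρ, PW_concat, mul_assoc, mul_assoc,
                  hS.gen_zero d hd c hc hdc, mul_zero, mul_zero]
        rw [heq]
        refine IsOpen.inter (IsOpen.inter ?_ ?_) ?_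
        · exact hIH1.preimage (hr (inv c))
        · exact hIH2.preimage (hl r)
        · rw [Set.setOf_eq_eq_singleton]
          exact isClosed_singleton.isOpen_compl

end Topology

end Stmt7Aux

open Stmt7Aux in
/-- A compact neighborhood of zero in a non-discrete locally compact
semitopological polycyclic monoid meets some Green R-class in an infinite set. -/
theorem stmt7 {S : Type*} [MonoidWithZero S] (inv : S → S) (Λ : Set S)
    (hS : IsPolycyclicMonoid S inv Λ)
    [TopologicalSpace S] [T2Space S] [LocallyCompactSpace S]
    (hl : ∀ a : S, Continuous (fun x : S => a * x))
    (hr : ∀ a : S, Continuous (fun x : S => x * a))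
    (hnd : ¬ DiscreteTopology S)
    (U₀ : Set S) (hU : U₀ ∈ nhds (0 : S)) (hUc : IsCompact U₀) :
    ∃ u : S, (U₀ ∩ greenR u).Infinite := by
  classical
  by_contra hcon
  push_neg at hcon
  have hfin : ∀ u : S, (U₀ ∩ greenR u).Finite := fun u => hcon u
  obtain ⟨x, hx, y, hy, hxy⟩ := two_letters hS
  have h0U : (0 : S) ∈ U₀ := mem_of_mem_nhds hU
  -- every nonzero point is isolated
  have hiso : ∀ s : S, s ≠ 0 → IsOpen {t : S | t = s} := by
    intro s hs
    rcases nf_all hS s with rfl | ⟨u, v, hu, hv, rfl⟩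
    · exact absurd rfl hs
    · exact iso hS hx hy hxy hl hr (u.length + v.length) u v hu hv le_rfl
  -- U₀ is almost contained in every neighbourhood of 0
  have hcof : ∀ V ∈ nhds (0 : S), (U₀ \ V).Finite := by
    intro V hV
    set F : S → Set S := fun s => if s = 0 then interior V else {t | t = s} with hF
    have hFopen : ∀ s, IsOpen (F s) := by
      intro s
      by_cases h : s = 0
      · simp only [hF, h, if_pos rfl]; exact isOpen_interior
      · simp only [hF, if_neg h]; exact hiso s h
    have hcover : U₀ ⊆ ⋃ s, F s := by
      intro a _
      by_cases h : a = 0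
      · refine Set.mem_iUnion.mpr ⟨0, ?_⟩
        simp only [hF, if_pos rfl]
        rw [h]
        exact mem_interior_iff_mem_nhds.mpr hV
      · refine Set.mem_iUnion.mpr ⟨a, ?_⟩
        simp only [hF, if_neg h]
        exact rfl
    obtain ⟨t, ht⟩ := hUc.elim_finite_subcover F hFopen hcover
    apply Set.Finite.subset t.finite_toSet
    rintro a ⟨haU, haV⟩
    have := ht haU
    simp only [Set.mem_iUnion] at this
    obtain ⟨s, hst, has⟩ := this
    by_cases h : s = 0
    · exfalso
      rw [hF] at has
      simp only [h, if_pos rfl] at has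
      exact haV (interior_subset has)
    · rw [hF] at has
      simp only [if_neg h] at has
      exact has ▸ hst
  -- almost invariance of U₀ under right translations
  have hE : ∀ c : S, {s : S | s ∈ U₀ ∧ s * c ∉ U₀}.Finite := by
    intro c
    have hVo : IsOpen ((fun s : S => s * c) ⁻¹' interior U₀) :=
      isOpen_interior.preimage (hr c)
    have hV : (fun s : S => s * c) ⁻¹' interior U₀ ∈ nhds (0 : S) := by
      apply hVo.mem_nhds
      show (0 : S) * c ∈ interior U₀
      rw [zero_mul]
      exact mem_interior_iff_mem_nhds.mpr hU
    apply (hcof _ hV).subset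
    rintro s ⟨hsU, hsc⟩
    exact ⟨hsU, fun hmem => hsc (interior_subset hmem)⟩
  -- every nonzero element of U₀ escapes via an exit point
  have hexit : ∀ t : S, t ∈ Λ → ∀ s : S, s ∈ U₀ → s ≠ 0 →
      ∃ e, (e ∈ U₀ ∧ e * t ∉ U₀) ∧ e ≠ 0 ∧
        ∃ k, s = e * QW inv (List.replicate k t) := by
    intro t ht s hsU hs0
    obtain ⟨u, v, hu, hv, hsnf⟩ := (nf_all hS s).resolve_left hs0
    have hinj : Function.Injective (fun k => s * PW (List.replicate k t)) :=
      orb_inj hS hx hy hxy hu hv hsnf ht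
    have hKfin : {k : ℕ | s * PW (List.replicate k t) ∈ U₀}.Finite := by
      have hsubK : {k : ℕ | s * PW (List.replicate k t) ∈ U₀}
          ⊆ (fun k => s * PW (List.replicate k t)) ⁻¹' (U₀ ∩ greenR s) := by
        intro k hk
        exact ⟨hk, green_mem hS (rep_mem hS ht k) s⟩
      exact (((hfin s).preimage hinj.injOn)).subset hsubK
    have hBne : {k : ℕ | s * PW (List.replicate k t) ∉ U₀}.Nonempty := by
      by_contra hB
      rw [Set.not_nonempty_iff_eq_empty] at hB
      have huniv : {k : ℕ | s * PW (List.replicate k t) ∈ U₀} = Set.univ := by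
        ext k
        simp only [Set.mem_setOf_eq, Set.mem_univ, iff_true]
        by_contra hk
        exact absurd (hB ▸ hk : k ∈ (∅ : Set ℕ)) (Set.notMem_empty k)
      rw [huniv] at hKfin
      exact Set.infinite_univ hKfin
    have hNmem : s * PW (List.replicate (sInf {k : ℕ | s * PW (List.replicate k t) ∉ U₀}) t) ∉ U₀ :=
      Nat.sInf_mem hBne
    have hN0 : sInf {k : ℕ | s * PW (List.replicate k t) ∉ U₀} ≠ 0 := by
      intro h
      apply hNmem
      rw [h]
      simpa [PW] using hsU
    obtain ⟨k, hkN⟩ : ∃ k, sInf {k : ℕ | s * PW (List.replicate k t) ∉ U₀} = k + 1 :=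
      ⟨sInf {k : ℕ | s * PW (List.replicate k t) ∉ U₀} - 1, by omega⟩
    have hkU : s * PW (List.replicate k t) ∈ U₀ := by
      by_contra hk
      have := Nat.sInf_le (show k ∈ {k : ℕ | s * PW (List.replicate k t) ∉ U₀} from hk)
      omega
    have hrec : s * PW (List.replicate k t) * QW inv (List.replicate k t) = s := by
      rw [mul_assoc, PQ_one hS (rep_mem hS ht k), mul_one]
    refine ⟨s * PW (List.replicate k t), ⟨hkU, ?_⟩, ?_, k, hrec.symm⟩
    · rw [mul_assoc, ← PW_concat, ← List.replicate_succ']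
      rw [hkN] at hNmem
      exact hNmem
    · intro h0
      apply hs0
      rw [← hrec, h0, zero_mul]
  -- finiteness of double orbits
  have hWfin : ∀ e f : S, e ≠ 0 → f ≠ 0 →
      {s : S | s ≠ 0 ∧ (∃ k, s = e * QW inv (List.replicate k x)) ∧
        (∃ j, s = f * QW inv (List.replicate j y))}.Finite := by
    intro e f he hf
    obtain ⟨u, v, hu, hv, rfl⟩ := (nf_all hS e).resolve_left he
    obtain ⟨u', v', hu', hv', rfl⟩ := (nf_all hS f).resolve_left hf
    apply Set.Finite.subset
      (((Set.finite_Iic v.length).image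
          (fun k => (QW inv u * PW v) * QW inv (List.replicate k x))).union
        ((Set.finite_Iic v'.length).image
          (fun j => (QW inv u' * PW v') * QW inv (List.replicate j y))))
    rintro s ⟨hs0, ⟨k, hk⟩, ⟨j, hj⟩⟩
    by_cases hkb : k ≤ v.length
    · exact Or.inl ⟨k, hkb, hk.symm⟩
    · by_cases hjb : j ≤ v'.length
      · exact Or.inr ⟨j, hjb, hj.symm⟩
      · exfalso
        rcases shapeA hS hx v.length v u k hu hv le_rfl (by omega) with h0 | ⟨i, hi, hvali⟩
        · exact hs0 (by rw [hk, h0])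
        rcases shapeA hS hy v'.length v' u' j hu' hv' le_rfl (by omega) with h0 | ⟨i', hi', hvalj⟩
        · exact hs0 (by rw [hj, h0])
        exact headclash hS hx hy hxy hu hu' hi hi'
          (by rw [← hvali, ← hk, hj, hvalj])
  -- U₀ \ {0} is finite
  have hXfin : (U₀ \ {0}).Finite := by
    have hsub : U₀ \ {0} ⊆
        ⋃ e ∈ {s : S | s ∈ U₀ ∧ s * x ∉ U₀}, ⋃ f ∈ {s : S | s ∈ U₀ ∧ s * y ∉ U₀},
          {s : S | s ≠ 0 ∧ (∃ k, s = e * QW inv (List.replicate k x)) ∧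
            (∃ j, s = f * QW inv (List.replicate j y))} := by
      rintro s ⟨hsU, hs0'⟩
      have hs0 : s ≠ 0 := hs0'
      obtain ⟨e, heE, he0, k, hk⟩ := hexit x hx s hsU hs0
      obtain ⟨f, hfE, hf0, j, hj⟩ := hexit y hy s hsU hs0
      exact Set.mem_biUnion heE (Set.mem_biUnion hfE ⟨hs0, ⟨k, hk⟩, ⟨j, hj⟩⟩)
    refine Set.Finite.subset ?_ hsub
    refine (hE x).biUnion (fun e heE => (hE y).biUnion (fun f hfE => hWfin e f ?_ ?_))
    · intro h0
      apply heE.2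
      rw [h0, zero_mul]
      exact h0U
    · intro h0
      apply hfE.2
      rw [h0, zero_mul]
      exact h0U
  -- hence 0 is isolated, hence the topology is discrete: contradiction
  have h0open : IsOpen {t : S | t = (0 : S)} := by
    have hcl : IsClosed (U₀ \ {0}) := hXfin.isClosed
    have hset : {t : S | t = (0 : S)} = interior U₀ \ (U₀ \ {0}) := by
      ext a
      simp only [Set.mem_setOf_eq, Set.mem_diff, Set.mem_singleton_iff]
      constructor
      · rintro rfl
        exact ⟨mem_interior_iff_mem_nhds.mpr hU, fun h => h.2 rfl⟩
      · rintro ⟨hai, ha⟩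
        by_contra h0
        exact ha ⟨interior_subset hai, h0⟩
    rw [hset]
    exact isOpen_interior.sdiff hcl
  apply hnd
  rw [discreteTopology_iff_isOpen_singleton]
  intro a
  by_cases h : a = 0
  · subst h
    rw [← Set.setOf_eq_eq_singleton]
    exact h0open
  · rw [← Set.setOf_eq_eq_singleton]
    exact hiso a h
end

section
/- Let S be a non-discrete locally compact semitopological polycyclic monoid with generating set Λ, and let U₀ be a compact neighborhood of the zero 0 in S. Then U₀ has infinite intersection with every non-zero Green R-class of S (i.e., with R_a for every non-zero a ∈ S). -/
namespace PolyAux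
set_option linter.unusedSectionVars false

variable {S : Type*} [MonoidWithZero S]

def Wrd (Λ : Set S) (w : List S) : Prop := ∀ x ∈ w, x ∈ Λ

def E (inv : S → S) (q p : List S) : S := inv q.prod * p.prod

variable {inv : S → S} {Λ : Set S}

lemma inv_invol (hS : IsPolycyclicMonoid S inv Λ) (a : S) : inv (inv a) = a := by
  have h := hS.inv_inverse a
  exact (hS.inv_unique (inv a) a h.2 h.1).symm

lemma inv_one' (hS : IsPolycyclicMonoid S inv Λ) : inv (1:S) = 1 :=
  (hS.inv_unique 1 1 (by simp) (by simp)).symm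

lemma inv_of_idem (hS : IsPolycyclicMonoid S inv Λ) {e : S} (he : e * e = e) : inv e = e :=
  (hS.inv_unique e e (by rw [he, he]) (by rw [he, he])).symm

lemma idem_pull {e : S} (he : e * e = e) (z : S) : e * (e * z) = e * z := by
  rw [← mul_assoc, he]

lemma idem_mul (hS : IsPolycyclicMonoid S inv Λ) {e f : S}
    (he : e * e = e) (hf : f * f = f) : (e * f) * (e * f) = e * f := by
  set x := inv (e * f) with hx
  have h1 : (e * f) * x * (e * f) = e * f := (hS.inv_inverse (e*f)).1
  have h2 : x * (e * f) * x = x := (hS.inv_inverse (e*f)).2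
  have h2' : x * (e * (f * x)) = x := by simpa [mul_assoc] using h2
  have hfxe : f * (x * e) = x := by
    have := hS.inv_unique (e * f) (f * (x * e)) ?_ ?_
    · rw [← hx] at this; simpa [mul_assoc] using this
    · simp only [mul_assoc]
      rw [idem_pull hf, idem_pull he]
      simpa [mul_assoc] using h1
    · simp only [mul_assoc]
      rw [idem_pull he, idem_pull hf]
      calc f * (x * (e * (f * (x * e)))) = f * ((x * (e * (f * x))) * e) := by
            simp [mul_assoc]
        _ = f * (x * e) := by rw [h2']
  have hxx : x * x = x := by
    have step : x * x = (f * (x * e)) * (f * (x * e)) := by rw [hfxe]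
    rw [step]
    calc (f * (x * e)) * (f * (x * e)) = f * ((x * (e * (f * x))) * e) := by
          simp [mul_assoc]
      _ = f * (x * e) := by rw [h2']
      _ = x := hfxe
  have hefx : e * f = x := by
    have h3 := hS.inv_unique x (e * f) (by simpa [mul_assoc] using h2)
      (by simpa [mul_assoc] using h1)
    rw [h3, inv_of_idem hS hxx]
  rw [hefx]; exact hxx

lemma idem_comm (hS : IsPolycyclicMonoid S inv Λ) {e f : S}
    (he : e * e = e) (hf : f * f = f) : e * f = f * e := by
  have hef := idem_mul hS he hf
  have hfe := idem_mul hS hf he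
  have h1 : (e * f) * (f * e) * (e * f) = e * f := by
    simp only [mul_assoc]
    rw [idem_pull hf, idem_pull he]
    simpa [mul_assoc] using hef
  have h2 : (f * e) * (e * f) * (f * e) = f * e := by
    simp only [mul_assoc]
    rw [idem_pull he, idem_pull hf]
    simpa [mul_assoc] using hfe
  have h3 := hS.inv_unique (e * f) (f * e) h1 h2
  rw [h3, inv_of_idem hS hef]

lemma inv_mul_rev (hS : IsPolycyclicMonoid S inv Λ) (a b : S) :
    inv (a * b) = inv b * inv a := by
  have ia := (hS.inv_inverse a).1
  have ib := (hS.inv_inverse b).1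
  have ia' := (hS.inv_inverse a).2
  have ib' := (hS.inv_inverse b).2
  have ea : (a * inv a) * (a * inv a) = a * inv a := by
    calc (a * inv a) * (a * inv a) = (a * inv a * a) * inv a := by simp [mul_assoc]
      _ = a * inv a := by rw [ia]
  have ea' : (inv a * a) * (inv a * a) = inv a * a := by
    calc (inv a * a) * (inv a * a) = (inv a * a * inv a) * a := by simp [mul_assoc]
      _ = inv a * a := by rw [ia']
  have eb : (b * inv b) * (b * inv b) = b * inv b := by
    calc (b * inv b) * (b * inv b) = (b * inv b * b) * inv b := by simp [mul_assoc]
      _ = b * inv b := by rw [ib]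
  have eb' : (inv b * b) * (inv b * b) = inv b * b := by
    calc (inv b * b) * (inv b * b) = (inv b * b * inv b) * b := by simp [mul_assoc]
      _ = inv b * b := by rw [ib']
  refine (hS.inv_unique (a * b) (inv b * inv a) ?_ ?_).symm
  · calc (a * b) * (inv b * inv a) * (a * b)
        = a * ((b * inv b) * (inv a * a)) * b := by simp [mul_assoc]
      _ = a * ((inv a * a) * (b * inv b)) * b := by rw [idem_comm hS eb ea']
      _ = (a * inv a * a) * (b * inv b * b) := by simp [mul_assoc]
      _ = a * b := by rw [ia, ib]
  · calc (inv b * inv a) * (a * b) * (inv b * inv a)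
        = inv b * ((inv a * a) * (b * inv b)) * inv a := by simp [mul_assoc]
      _ = inv b * ((b * inv b) * (inv a * a)) * inv a := by rw [idem_comm hS ea' eb]
      _ = (inv b * b * inv b) * (inv a * a * inv a) := by simp [mul_assoc]
      _ = inv b * inv a := by rw [ib', ia']

lemma letter_ne_zero (hS : IsPolycyclicMonoid S inv Λ) {x : S} (hx : x ∈ Λ) : x ≠ (0:S) := by
  intro h
  have h1 := hS.gen_unit x hx
  rw [h, zero_mul] at h1
  exact hS.zero_ne_one h1

lemma Wrd.append {u v : List S} (hu : Wrd Λ u) (hv : Wrd Λ v) : Wrd Λ (u ++ v) :=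
  fun x hx => (List.mem_append.1 hx).elim (hu x) (hv x)

lemma Wrd.of_append_left {u v : List S} (h : Wrd Λ (u ++ v)) : Wrd Λ u :=
  fun x hx => h x (by simp [hx])

lemma Wrd.of_append_right {u v : List S} (h : Wrd Λ (u ++ v)) : Wrd Λ v :=
  fun x hx => h x (by simp [hx])

lemma wmi (hS : IsPolycyclicMonoid S inv Λ) {w : List S} (hw : Wrd Λ w) :
    w.prod * inv w.prod = 1 := by
  induction w with
  | nil => simp [inv_one' hS]
  | cons x w ih =>
    have hx : x ∈ Λ := hw x (by simp)
    have hw' : Wrd Λ w := fun y hy => hw y (by simp [hy])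
    rw [List.prod_cons, inv_mul_rev hS]
    calc (x * w.prod) * (inv w.prod * inv x)
        = x * (w.prod * inv w.prod) * inv x := by simp [mul_assoc]
      _ = x * inv x := by rw [ih hw']; simp
      _ = 1 := hS.gen_unit x hx

lemma wmi_pull (hS : IsPolycyclicMonoid S inv Λ) {w : List S} (hw : Wrd Λ w) (z : S) :
    w.prod * (inv w.prod * z) = z := by
  rw [← mul_assoc, wmi hS hw, one_mul]

lemma CL (hS : IsPolycyclicMonoid S inv Λ) : ∀ (s p : List S), Wrd Λ s → Wrd Λ p →
    (∃ u, Wrd Λ u ∧ p = u ++ s ∧ p.prod * inv s.prod = u.prod) ∨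
    (∃ u, Wrd Λ u ∧ s = u ++ p ∧ p.prod * inv s.prod = inv u.prod) ∨
    (p.prod * inv s.prod = 0 ∧ ∃ x ∈ Λ, ∃ y ∈ Λ, x ≠ y) := by
  intro s
  induction s using List.reverseRecOn with
  | nil =>
    intro p _ hp
    left
    exact ⟨p, hp, by simp, by simp [inv_one' hS]⟩
  | append_singleton s₀ y ih =>
    intro p hs hp
    have hy : y ∈ Λ := hs y (by simp)
    have hs₀ : Wrd Λ s₀ := Wrd.of_append_left hs
    rcases p.eq_nil_or_concat with rfl | ⟨p₀, x, rfl⟩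
    · right; left
      exact ⟨s₀ ++ [y], hs, by simp, by simp⟩
    · have hx : x ∈ Λ := hp x (by simp)
      have hp₀ : Wrd Λ p₀ := by
        rw [List.concat_eq_append] at hp
        exact Wrd.of_append_left hp
      have key : (p₀.concat x).prod * inv ((s₀ ++ [y]).prod)
          = p₀.prod * ((x * inv y) * inv s₀.prod) := by
        rw [List.concat_eq_append]
        have e1 : (p₀ ++ [x]).prod = p₀.prod * x := by simp
        have e2 : (s₀ ++ [y]).prod = s₀.prod * y := by simp
        rw [e1, e2, inv_mul_rev hS]
        simp [mul_assoc]
      by_cases hxy : x = y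
      · subst hxy
        rw [key, hS.gen_unit x hx, one_mul]
        rcases ih p₀ hs₀ hp₀ with ⟨u, hu, hpe, hv⟩ | ⟨u, hu, hse, hv⟩ | ⟨hv, hwit⟩
        · left
          refine ⟨u, hu, ?_, ?_⟩
          · rw [List.concat_eq_append, hpe, List.append_assoc]
          · rw [← hv]
        · right; left
          refine ⟨u, hu, ?_, ?_⟩
          · rw [List.concat_eq_append, hse, List.append_assoc]
          · rw [← hv]
        · right; right
          exact ⟨hv, hwit⟩
      · right; right
        constructor
        · rw [key, hS.gen_zero x hx y hy hxy, zero_mul, mul_zero]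
        · exact ⟨x, hx, y, hy, hxy⟩

lemma E_ne_zero (hS : IsPolycyclicMonoid S inv Λ) {q p : List S}
    (hq : Wrd Λ q) (hp : Wrd Λ p) : E inv q p ≠ 0 := by
  intro h
  have lhs : q.prod * (E inv q p * inv p.prod) = 1 := by
    show q.prod * ((inv q.prod * p.prod) * inv p.prod) = 1
    calc q.prod * ((inv q.prod * p.prod) * inv p.prod)
        = (q.prod * inv q.prod) * (p.prod * inv p.prod) := by simp [mul_assoc]
      _ = 1 := by rw [wmi hS hq, wmi hS hp, one_mul]
  rw [h, zero_mul, mul_zero] at lhs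
  exact hS.zero_ne_one lhs

lemma prodE (hS : IsPolycyclicMonoid S inv Λ) {q p s t : List S}
    (hq : Wrd Λ q) (hp : Wrd Λ p) (hs : Wrd Λ s) (ht : Wrd Λ t) :
    (∃ u, Wrd Λ u ∧ p = u ++ s ∧ E inv q p * E inv s t = E inv q (u ++ t)) ∨
    (∃ u, Wrd Λ u ∧ s = u ++ p ∧ E inv q p * E inv s t = E inv (u ++ q) t) ∨
    (E inv q p * E inv s t = 0 ∧ ∃ x ∈ Λ, ∃ y ∈ Λ, x ≠ y) := by
  have base : E inv q p * E inv s t = inv q.prod * ((p.prod * inv s.prod) * t.prod) := by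
    show (inv q.prod * p.prod) * (inv s.prod * t.prod) = _
    simp [mul_assoc]
  rcases CL hS s p hs hp with ⟨u, hu, hpe, hv⟩ | ⟨u, hu, hse, hv⟩ | ⟨hv, hwit⟩
  · left
    refine ⟨u, hu, hpe, ?_⟩
    rw [base, hv]
    show _ = inv q.prod * (u ++ t).prod
    rw [List.prod_append]
  · right; left
    refine ⟨u, hu, hse, ?_⟩
    rw [base, hv]
    show _ = inv ((u ++ q).prod) * t.prod
    rw [List.prod_append, inv_mul_rev hS]
    simp [mul_assoc]
  · right; right
    refine ⟨?_, hwit⟩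
    rw [base, hv]
    simp

lemma STR (hS : IsPolycyclicMonoid S inv Λ) (z : S) :
    z = 0 ∨ ∃ q p, Wrd Λ q ∧ Wrd Λ p ∧ z = E inv q p := by
  have hz : z ∈ Subsemigroup.closure (Λ ∪ inv '' Λ) := by
    rw [hS.generates]; exact Subsemigroup.mem_top z
  induction hz using Subsemigroup.closure_induction with
  | mem x h =>
    rcases h with h | ⟨y, hy, rfl⟩
    · right
      refine ⟨[], [x], by intro z hz; simp at hz, ?_, ?_⟩
      · intro z hz; simp at hz; subst hz; exact h
      · show x = inv ([].prod) * ([x]).prod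
        simp [inv_one' hS]
    · right
      refine ⟨[y], [], ?_, by intro z hz; simp at hz, ?_⟩
      · intro z hz; simp at hz; subst hz; exact hy
      · show inv y = inv (([y]).prod) * ([].prod)
        simp
  | mul x y hxc hyc ihx ihy =>
    rcases ihx with rfl | ⟨q, p, hq, hp, rfl⟩
    · left; rw [zero_mul]
    rcases ihy with rfl | ⟨s, t, hs, ht, rfl⟩
    · left; rw [mul_zero]
    rcases prodE hS hq hp hs ht with ⟨u, hu, _, hv⟩ | ⟨u, hu, _, hv⟩ | ⟨hv, _⟩
    · right; exact ⟨q, u ++ t, hq, Wrd.append hu ht, hv⟩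
    · right; exact ⟨u ++ q, t, Wrd.append hu hq, ht, hv⟩
    · left; exact hv

lemma two_letters (hS : IsPolycyclicMonoid S inv Λ) : ∃ x ∈ Λ, ∃ y ∈ Λ, x ≠ y := by
  by_contra hcon
  push_neg at hcon
  have h0 : (0:S) ∈ Subsemigroup.closure (Λ ∪ inv '' Λ) := by
    rw [hS.generates]; exact Subsemigroup.mem_top 0
  have main : ∀ z : S, z ∈ Subsemigroup.closure (Λ ∪ inv '' Λ) →
      ∃ q p, Wrd Λ q ∧ Wrd Λ p ∧ z = E inv q p := by
    intro z hz
    induction hz using Subsemigroup.closure_induction with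
    | mem x h =>
      rcases h with h | ⟨y, hy, rfl⟩
      · refine ⟨[], [x], by intro z hz; simp at hz, ?_, ?_⟩
        · intro z hz; simp at hz; subst hz; exact h
        · show x = inv ([].prod) * ([x]).prod
          simp [inv_one' hS]
      · refine ⟨[y], [], ?_, by intro z hz; simp at hz, ?_⟩
        · intro z hz; simp at hz; subst hz; exact hy
        · show inv y = inv (([y]).prod) * ([].prod)
          simp
    | mul x y hxc hyc ihx ihy =>
      obtain ⟨q, p, hq, hp, rfl⟩ := ihx
      obtain ⟨s, t, hs, ht, rfl⟩ := ihy
      rcases prodE hS hq hp hs ht with ⟨u, hu, _, hv⟩ | ⟨u, hu, _, hv⟩ | ⟨_, a, ha, b, hb, hab⟩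
      · exact ⟨q, u ++ t, hq, Wrd.append hu ht, hv⟩
      · exact ⟨u ++ q, t, Wrd.append hu hq, ht, hv⟩
      · exact absurd (hcon a ha b hb) hab
  obtain ⟨q, p, hq, hp, h⟩ := main 0 h0
  exact E_ne_zero hS hq hp h.symm

lemma NF1 (hS : IsPolycyclicMonoid S inv Λ) {u : List S} (hu : Wrd Λ u) (hne : u ≠ []) :
    u.prod ≠ 1 := by
  obtain ⟨x, u₀, rfl⟩ : ∃ x u₀, u = x :: u₀ := by
    cases u with
    | nil => exact absurd rfl hne
    | cons x u₀ => exact ⟨x, u₀, rfl⟩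
  intro h
  rw [List.prod_cons] at h
  have hx : x ∈ Λ := hu x (by simp)
  have hu₀ : Wrd Λ u₀ := fun z hz => hu z (by simp [hz])
  have hx2 : x = inv u₀.prod := by
    have e := congrArg (fun z => z * inv u₀.prod) h
    rw [mul_assoc, wmi hS hu₀, mul_one, one_mul] at e
    exact e
  obtain ⟨a, ha, b, hb, hab⟩ := two_letters hS
  obtain ⟨y, hy, hyx⟩ : ∃ y ∈ Λ, y ≠ x := by
    by_cases hax : a = x
    · exact ⟨b, hb, fun hbx => hab (hax.trans hbx.symm)⟩
    · exact ⟨a, ha, hax⟩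
  have h0 : y * inv x = 0 := hS.gen_zero y hy x hx hyx
  rw [hx2, inv_invol hS] at h0
  have hy0 : y = 0 := by
    have e := congrArg (fun z => z * inv u₀.prod) h0
    rw [mul_assoc, wmi hS hu₀, mul_one, zero_mul] at e
    exact e
  have h1 := hS.gen_unit y hy
  rw [hy0, zero_mul] at h1
  exact hS.zero_ne_one h1

lemma NF1' (hS : IsPolycyclicMonoid S inv Λ) {u : List S} (hu : Wrd Λ u) (hne : u ≠ []) :
    inv u.prod * u.prod ≠ 1 := by
  obtain ⟨x, u₀, rfl⟩ : ∃ x u₀, u = x :: u₀ := by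
    cases u with
    | nil => exact absurd rfl hne
    | cons x u₀ => exact ⟨x, u₀, rfl⟩
  intro h
  have hx : x ∈ Λ := hu x (by simp)
  have hu₀ : Wrd Λ u₀ := fun z hz => hu z (by simp [hz])
  have e1 : u₀.prod * ((inv ((x :: u₀).prod) * (x :: u₀).prod) * inv u₀.prod)
      = u₀.prod * (1 * inv u₀.prod) := by rw [h]
  rw [one_mul, wmi hS hu₀, List.prod_cons, inv_mul_rev hS] at e1
  have e2 : u₀.prod * (((inv u₀.prod * inv x) * (x * u₀.prod)) * inv u₀.prod)
      = inv x * x := by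
    calc u₀.prod * (((inv u₀.prod * inv x) * (x * u₀.prod)) * inv u₀.prod)
        = u₀.prod * (inv u₀.prod * (inv x * (x * (u₀.prod * inv u₀.prod)))) := by
          simp only [mul_assoc]
      _ = inv x * (x * (u₀.prod * inv u₀.prod)) := wmi_pull hS hu₀ _
      _ = inv x * x := by rw [wmi hS hu₀, mul_one]
  rw [e2] at e1
  obtain ⟨a, ha, b, hb, hab⟩ := two_letters hS
  obtain ⟨y, hy, hyx⟩ : ∃ y ∈ Λ, y ≠ x := by
    by_cases hax : a = x
    · exact ⟨b, hb, fun hbx => hab (hax.trans hbx.symm)⟩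
    · exact ⟨a, ha, hax⟩
  have h0 : y * inv x = 0 := hS.gen_zero y hy x hx hyx
  have hy0 : y = 0 := by
    have e := congrArg (fun z => z * x) h0
    rw [mul_assoc, e1, mul_one, zero_mul] at e
    exact e
  have h1 := hS.gen_unit y hy
  rw [hy0, zero_mul] at h1
  exact hS.zero_ne_one h1

lemma word_prod_eq_one (hS : IsPolycyclicMonoid S inv Λ) {u : List S}
    (hu : Wrd Λ u) (h : u.prod = 1) : u = [] := by
  by_contra hne; exact NF1 hS hu hne h

lemma cancel_one (hS : IsPolycyclicMonoid S inv Λ) {u v : List S}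
    (hu : Wrd Λ u) (hv : Wrd Λ v) (h : u.prod * inv v.prod = 1) : u = v := by
  rcases CL hS v u hv hu with ⟨w, hw, hue, hval⟩ | ⟨w, hw, hve, hval⟩ | ⟨hval, _⟩
  · rw [hval] at h
    have hw0 := word_prod_eq_one hS hw h
    rw [hw0] at hue; simpa using hue
  · rw [hval] at h
    have : w.prod = 1 := by rw [← inv_invol hS w.prod, h, inv_one' hS]
    have hw0 := word_prod_eq_one hS hw this
    rw [hw0] at hve; simp at hve; exact hve.symm
  · rw [hval] at h; exact absurd h hS.zero_ne_one

lemma NF2 (hS : IsPolycyclicMonoid S inv Λ) {u v : List S}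
    (hu : Wrd Λ u) (hv : Wrd Λ v) (h : u.prod = v.prod) : u = v :=
  cancel_one hS hu hv (by rw [h, wmi hS hv])

lemma prod_prod_one (hS : IsPolycyclicMonoid S inv Λ) {u v : List S}
    (hu : Wrd Λ u) (hv : Wrd Λ v) (h : u.prod * v.prod = 1) : u = [] ∧ v = [] := by
  have h2 := word_prod_eq_one hS (Wrd.append hu hv) (by rw [List.prod_append]; exact h)
  simpa using h2

lemma inv_cancel_one (hS : IsPolycyclicMonoid S inv Λ) {u v : List S}
    (hu : Wrd Λ u) (hv : Wrd Λ v) (h : inv u.prod * v.prod = 1) : u = [] ∧ v = [] := by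
  have hvu : v.prod = u.prod := by
    have e := congrArg (fun z => u.prod * z) h
    rw [wmi_pull hS hu, mul_one] at e
    exact e
  have hveq : v = u := NF2 hS hv hu hvu
  subst hveq
  have hnil : v = [] := by
    by_contra hne
    exact NF1' hS hv hne h
  exact ⟨hnil, hnil⟩

lemma inv_inv_one (hS : IsPolycyclicMonoid S inv Λ) {u v : List S}
    (hu : Wrd Λ u) (hv : Wrd Λ v) (h : inv u.prod * inv v.prod = 1) : u = [] ∧ v = [] := by
  have h1 : inv ((v ++ u).prod) = 1 := by
    rw [List.prod_append, inv_mul_rev hS]; exact h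
  have h2 : (v ++ u).prod = 1 := by
    rw [← inv_invol hS ((v ++ u).prod), h1, inv_one' hS]
  have h3 := word_prod_eq_one hS (Wrd.append hv hu) h2
  simp at h3
  exact ⟨h3.2, h3.1⟩

lemma NF3 (hS : IsPolycyclicMonoid S inv Λ) {q p s t : List S}
    (hq : Wrd Λ q) (hp : Wrd Λ p) (hs : Wrd Λ s) (ht : Wrd Λ t)
    (h : E inv q p = E inv s t) : q = s ∧ p = t := by
  simp only [E] at h
  have hp2 : p.prod = (q.prod * inv s.prod) * t.prod := by
    have e := congrArg (fun z => q.prod * z) h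
    rw [wmi_pull hS hq] at e
    rw [e, mul_assoc]
  rcases CL hS s q hs hq with ⟨u, hu, hqe, hval⟩ | ⟨u, hu, hse, hval⟩ | ⟨hval, _⟩
  · rw [hval] at hp2
    have hpe : p = u ++ t := NF2 hS hp (Wrd.append hu ht)
      (by rw [hp2, List.prod_append])
    have X2 : s.prod * ((inv q.prod * p.prod) * inv t.prod) = inv u.prod * u.prod := by
      rw [hqe, hpe]
      rw [List.prod_append, List.prod_append, inv_mul_rev hS]
      calc s.prod * (((inv s.prod * inv u.prod) * (u.prod * t.prod)) * inv t.prod)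
          = s.prod * (inv s.prod * (inv u.prod * (u.prod * (t.prod * inv t.prod)))) := by
            simp only [mul_assoc]
        _ = inv u.prod * (u.prod * (t.prod * inv t.prod)) := wmi_pull hS hs _
        _ = inv u.prod * u.prod := by rw [wmi hS ht, mul_one]
    have X1 : s.prod * ((inv s.prod * t.prod) * inv t.prod) = 1 := by
      calc s.prod * ((inv s.prod * t.prod) * inv t.prod)
          = s.prod * (inv s.prod * (t.prod * inv t.prod)) := by simp only [mul_assoc]
        _ = t.prod * inv t.prod := wmi_pull hS hs _
        _ = 1 := wmi hS ht
    rw [h] at X2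
    rw [X1] at X2
    have hu0 : u = [] := by
      by_contra hne
      exact NF1' hS hu hne X2.symm
    rw [hu0] at hqe hpe
    simp at hqe hpe
    exact ⟨hqe, hpe⟩
  · rw [hval] at hp2
    have hte : t = u ++ p := by
      refine NF2 hS ht (Wrd.append hu hp) ?_
      have e := congrArg (fun z => u.prod * z) hp2
      rw [wmi_pull hS hu] at e
      rw [List.prod_append, e]
    have X2 : q.prod * ((inv s.prod * t.prod) * inv p.prod) = inv u.prod * u.prod := by
      rw [hse, hte]
      rw [List.prod_append, List.prod_append, inv_mul_rev hS]
      calc q.prod * (((inv q.prod * inv u.prod) * (u.prod * p.prod)) * inv p.prod)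
          = q.prod * (inv q.prod * (inv u.prod * (u.prod * (p.prod * inv p.prod)))) := by
            simp only [mul_assoc]
        _ = inv u.prod * (u.prod * (p.prod * inv p.prod)) := wmi_pull hS hq _
        _ = inv u.prod * u.prod := by rw [wmi hS hp, mul_one]
    have X1 : q.prod * ((inv q.prod * p.prod) * inv p.prod) = 1 := by
      calc q.prod * ((inv q.prod * p.prod) * inv p.prod)
          = q.prod * (inv q.prod * (p.prod * inv p.prod)) := by simp only [mul_assoc]
        _ = p.prod * inv p.prod := wmi_pull hS hq _
        _ = 1 := wmi hS hp
    rw [← h] at X2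
    rw [X1] at X2
    have hu0 : u = [] := by
      by_contra hne
      exact NF1' hS hu hne X2.symm
    rw [hu0] at hse hte
    simp at hse hte
    exact ⟨hse.symm, hte.symm⟩
  · rw [hval, zero_mul] at hp2
    have : p.prod * inv p.prod = 1 := wmi hS hp
    rw [hp2, zero_mul] at this
    exact absurd this hS.zero_ne_one

open Classical in
noncomputable def decomp (inv : S → S) (Λ : Set S) (z : S) : List S × List S :=
  if h : ∃ q p, Wrd Λ q ∧ Wrd Λ p ∧ z = E inv q p then (h.choose, h.choose_spec.choose)
  else ([], [])

lemma decomp_spec (hS : IsPolycyclicMonoid S inv Λ) {z : S} (hz : z ≠ 0) :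
    Wrd Λ (decomp inv Λ z).1 ∧ Wrd Λ (decomp inv Λ z).2 ∧
      z = E inv (decomp inv Λ z).1 (decomp inv Λ z).2 := by
  have h : ∃ q p, Wrd Λ q ∧ Wrd Λ p ∧ z = E inv q p := (STR hS z).resolve_left hz
  unfold decomp
  rw [dif_pos h]
  exact ⟨h.choose_spec.choose_spec.1, h.choose_spec.choose_spec.2.1,
    h.choose_spec.choose_spec.2.2⟩

lemma decomp_eq (hS : IsPolycyclicMonoid S inv Λ) {q p : List S}
    (hq : Wrd Λ q) (hp : Wrd Λ p) : decomp inv Λ (E inv q p) = (q, p) := by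
  have h : ∃ q' p', Wrd Λ q' ∧ Wrd Λ p' ∧ E inv q p = E inv q' p' := ⟨q, p, hq, hp, rfl⟩
  unfold decomp
  rw [dif_pos h]
  obtain ⟨h1, h2, h3⟩ := h.choose_spec.choose_spec
  obtain ⟨e1, e2⟩ := NF3 hS h1 h2 hq hp h3.symm
  simp only [Prod.mk.injEq]
  exact ⟨e1, e2⟩

def Cls (inv : S → S) (Λ : Set S) (s : List S) : Set S :=
  {z | ∃ t, Wrd Λ t ∧ z = E inv s t}

lemma E_push (hS : IsPolycyclicMonoid S inv Λ) {s : List S} (q t : List S) (hs : Wrd Λ s) :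
    E inv q s * E inv s t = E inv q t := by
  show (inv q.prod * s.prod) * (inv s.prod * t.prod) = inv q.prod * t.prod
  calc (inv q.prod * s.prod) * (inv s.prod * t.prod)
      = inv q.prod * (s.prod * (inv s.prod * t.prod)) := by simp only [mul_assoc]
    _ = inv q.prod * t.prod := by rw [wmi_pull hS hs]

lemma E_mul_letter {s t : List S} (a : S) :
    E inv s t * a = E inv s (t ++ [a]) := by
  show (inv s.prod * t.prod) * a = inv s.prod * (t ++ [a]).prod
  rw [List.prod_append, List.prod_singleton, mul_assoc]

lemma E_mixed (hS : IsPolycyclicMonoid S inv Λ) {p : List S} (q u w : List S)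
    (hp : Wrd Λ p) : E inv q p * E inv (u ++ p) w = E inv (u ++ q) w := by
  show (inv q.prod * p.prod) * (inv ((u ++ p).prod) * w.prod) = inv ((u ++ q).prod) * w.prod
  rw [List.prod_append, List.prod_append, inv_mul_rev hS, inv_mul_rev hS]
  calc (inv q.prod * p.prod) * ((inv p.prod * inv u.prod) * w.prod)
      = inv q.prod * (p.prod * (inv p.prod * (inv u.prod * w.prod))) := by
        simp only [mul_assoc]
    _ = inv q.prod * (inv u.prod * w.prod) := by rw [wmi_pull hS hp]
    _ = (inv q.prod * inv u.prod) * w.prod := by rw [mul_assoc]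

lemma ideal_sub (hS : IsPolycyclicMonoid S inv Λ) {q p t : List S}
    (hq : Wrd Λ q) (hp : Wrd Λ p) (ht : Wrd Λ t) :
    {x : S | ∃ s, x = E inv q t * s} ⊆ {x : S | ∃ s, x = E inv q p * s} := by
  rintro x ⟨s, rfl⟩
  rcases STR hS s with rfl | ⟨v, w, hv, hw, rfl⟩
  · exact ⟨0, by rw [mul_zero, mul_zero]⟩
  rcases prodE hS hq ht hv hw with ⟨u, hu, _, hval⟩ | ⟨u, hu, _, hval⟩ | ⟨hval, _⟩
  · rw [hval]
    exact ⟨E inv p (u ++ w), (E_push hS q (u ++ w) hp).symm⟩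
  · rw [hval]
    exact ⟨E inv (u ++ p) w, (E_mixed hS q u w hp).symm⟩
  · rw [hval]
    exact ⟨0, by rw [mul_zero]⟩

lemma mem_greenR_of_cls (hS : IsPolycyclicMonoid S inv Λ) {q p t : List S}
    (hq : Wrd Λ q) (hp : Wrd Λ p) (ht : Wrd Λ t) :
    E inv q t ∈ greenR (E inv q p) :=
  Set.eq_of_subset_of_subset (ideal_sub hS hq hp ht) (ideal_sub hS hq ht hp)

lemma ea_ne_one (hS : IsPolycyclicMonoid S inv Λ) {a : S} (ha : a ∈ Λ) :
    inv a * a ≠ 1 := by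
  intro h
  have e1 : E inv [a] [a] = E inv ([]:List S) ([]:List S) := by
    show inv ([a]:List S).prod * ([a]:List S).prod = inv ([]:List S).prod * ([]:List S).prod
    rw [List.prod_singleton, List.prod_nil, inv_one' hS, one_mul, h]
  have ha' : Wrd Λ [a] := by intro z hz; simp at hz; subst hz; exact ha
  have hnil : Wrd Λ ([]:List S) := by intro z hz; simp at hz
  have := (NF3 hS ha' ha' hnil hnil e1).1
  simp at this

lemma ea_ne_zero (hS : IsPolycyclicMonoid S inv Λ) {a : S} (ha : a ∈ Λ) :
    inv a * a ≠ 0 := by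
  intro h
  have h1 : a * (inv a * a) = a := by
    rw [← mul_assoc]; exact (hS.inv_inverse a).1
  rw [h, mul_zero] at h1
  have h2 := hS.gen_unit a ha
  rw [← h1, zero_mul] at h2
  exact hS.zero_ne_one h2

section Topology

variable [TopologicalSpace S] [T2Space S]

lemma closure_fix {B : Set S} {F : S → S} {x : S}
    (hF : Continuous F) (hfix : ∀ z ∈ B, F z = z) (hx : x ∈ closure B) : F x = x := by
  haveI := mem_closure_iff_nhdsWithin_neBot.1 hx
  have h1 : Filter.Tendsto id (nhdsWithin x B) (nhds x) :=
    Filter.Tendsto.mono_left Filter.tendsto_id nhdsWithin_le_nhds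
  have h2 : Filter.Tendsto F (nhdsWithin x B) (nhds (F x)) :=
    (hF.tendsto x).mono_left nhdsWithin_le_nhds
  have h3 : Filter.Tendsto id (nhdsWithin x B) (nhds (F x)) := by
    refine h2.congr' ?_
    filter_upwards [self_mem_nhdsWithin] with z hz
    exact hfix z hz
  exact tendsto_nhds_unique h3 h1

lemma closure_const {B : Set S} {F : S → S} {x : S} (c : S)
    (hF : Continuous F) (hconst : ∀ z ∈ B, F z = c) (hx : x ∈ closure B) : F x = c := by
  haveI := mem_closure_iff_nhdsWithin_neBot.1 hx
  have h1 : Filter.Tendsto (fun _ : S => c) (nhdsWithin x B) (nhds c) := tendsto_const_nhds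
  have h2 : Filter.Tendsto F (nhdsWithin x B) (nhds (F x)) :=
    (hF.tendsto x).mono_left nhdsWithin_le_nhds
  have h3 : Filter.Tendsto (fun _ : S => c) (nhdsWithin x B) (nhds (F x)) := by
    refine h2.congr' ?_
    filter_upwards [self_mem_nhdsWithin] with z hz
    exact hconst z hz
  exact tendsto_nhds_unique h3 h1

lemma isolated_one (hS : IsPolycyclicMonoid S inv Λ)
    (hl : ∀ a : S, Continuous (fun x : S => a * x))
    (hr : ∀ a : S, Continuous (fun x : S => x * a)) :
    IsOpen {(1 : S)} := by
  obtain ⟨a, ha, b, hb, hab⟩ := two_letters hS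
  by_contra hopen
  have hmem : {(1:S)} ∉ nhds (1:S) := by
    intro hmem
    rcases mem_nhds_iff.1 hmem with ⟨o, ho, hoo, ho1⟩
    exact hopen (by rw [← subset_antisymm ho (Set.singleton_subset_iff.2 ho1)]; exact hoo)
  have h1 : (1:S) ∈ closure ({(1:S)}ᶜ) := by
    rw [mem_closure_iff_nhds]
    intro U hU
    by_contra hemp
    rw [Set.not_nonempty_iff_eq_empty] at hemp
    apply hmem
    apply Filter.mem_of_superset hU
    intro x hx
    by_contra hx1
    exact Set.eq_empty_iff_forall_notMem.1 hemp x ⟨hx, hx1⟩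
  set B1 : Set S := {z | ∃ s t, Wrd Λ s ∧ Wrd Λ t ∧ z = E inv (s ++ [a]) t} with hB1
  set B2 : Set S := {z | ∃ s t c, Wrd Λ s ∧ Wrd Λ t ∧ c ∈ Λ ∧ c ≠ a ∧
    z = E inv (s ++ [c]) t} with hB2
  set B3 : Set S := {z | ∃ t, Wrd Λ t ∧ z = E inv ([]:List S) (t ++ [a])} with hB3
  set B4 : Set S := {z | ∃ t c, Wrd Λ t ∧ c ∈ Λ ∧ c ≠ a ∧
    z = E inv ([]:List S) (t ++ [c])} with hB4
  have hcov : ({(1:S)}ᶜ : Set S) ⊆ {(0:S)} ∪ B1 ∪ B2 ∪ B3 ∪ B4 := by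
    intro z hz
    simp only [Set.mem_compl_iff, Set.mem_singleton_iff] at hz
    rcases STR hS z with rfl | ⟨q, p, hq, hp, rfl⟩
    · left; left; left; left; rfl
    rcases q.eq_nil_or_concat with rfl | ⟨q₀, c, rfl⟩
    · rcases p.eq_nil_or_concat with rfl | ⟨p₀, c, rfl⟩
      · exfalso
        apply hz
        show inv (([]:List S).prod) * ([]:List S).prod = 1
        rw [List.prod_nil, inv_one' hS, one_mul]
      · have hc : c ∈ Λ := hp c (by simp)
        have hp₀ : Wrd Λ p₀ := by
          rw [List.concat_eq_append] at hp; exact Wrd.of_append_left hp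
        by_cases hca : c = a
        · subst hca
          left; right
          exact ⟨p₀, hp₀, by rw [List.concat_eq_append]⟩
        · right
          exact ⟨p₀, c, hp₀, hc, hca, by rw [List.concat_eq_append]⟩
    · have hc : c ∈ Λ := hq c (by simp)
      have hq₀ : Wrd Λ q₀ := by
        rw [List.concat_eq_append] at hq; exact Wrd.of_append_left hq
      by_cases hca : c = a
      · subst hca
        left; left; left; right
        exact ⟨q₀, p, hq₀, hp, by rw [List.concat_eq_append]⟩
      · left; left; right
        exact ⟨q₀, p, c, hq₀, hp, hc, hca, by rw [List.concat_eq_append]⟩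
  have h2 := (closure_mono hcov) h1
  rw [closure_union, closure_union, closure_union, closure_union] at h2
  rcases h2 with ((((h | h) | h) | h) | h)
  · rw [closure_singleton] at h
    exact hS.zero_ne_one (Set.mem_singleton_iff.1 h).symm
  · have hfix : ∀ z ∈ B1, (fun w => (inv a * a) * w) z = z := by
      rintro z ⟨s, t, hs, ht, rfl⟩
      show (inv a * a) * (inv ((s ++ [a]).prod) * t.prod) = inv ((s ++ [a]).prod) * t.prod
      rw [List.prod_append, List.prod_singleton, inv_mul_rev hS]
      calc (inv a * a) * ((inv a * inv s.prod) * t.prod)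
          = inv a * ((a * inv a) * (inv s.prod * t.prod)) := by simp only [mul_assoc]
        _ = inv a * (inv s.prod * t.prod) := by rw [hS.gen_unit a ha, one_mul]
        _ = (inv a * inv s.prod) * t.prod := by rw [mul_assoc]
    have hres := closure_fix (hl (inv a * a)) hfix h
    simp only [mul_one] at hres
    exact ea_ne_one hS ha hres
  · have hconst : ∀ z ∈ B2, (fun w => (inv a * a) * w) z = 0 := by
      rintro z ⟨s, t, c, hs, ht, hc, hca, rfl⟩
      show (inv a * a) * (inv ((s ++ [c]).prod) * t.prod) = 0
      rw [List.prod_append, List.prod_singleton, inv_mul_rev hS]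
      calc (inv a * a) * ((inv c * inv s.prod) * t.prod)
          = inv a * ((a * inv c) * (inv s.prod * t.prod)) := by simp only [mul_assoc]
        _ = 0 := by rw [hS.gen_zero a ha c hc (Ne.symm hca), zero_mul, mul_zero]
    have hres := closure_const 0 (hl (inv a * a)) hconst h
    simp only [mul_one] at hres
    exact ea_ne_zero hS ha hres
  · have hfix : ∀ z ∈ B3, (fun w => w * (inv a * a)) z = z := by
      rintro z ⟨t, ht, rfl⟩
      show (inv (([]:List S).prod) * (t ++ [a]).prod) * (inv a * a)
        = inv (([]:List S).prod) * (t ++ [a]).prod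
      rw [List.prod_nil, inv_one' hS, one_mul, List.prod_append,
        List.prod_singleton]
      calc (t.prod * a) * (inv a * a) = t.prod * ((a * inv a) * a) := by
            simp only [mul_assoc]
        _ = t.prod * a := by rw [hS.gen_unit a ha, one_mul]
    have hres := closure_fix (hr (inv a * a)) hfix h
    simp only [one_mul] at hres
    exact ea_ne_one hS ha hres
  · have hconst : ∀ z ∈ B4, (fun w => w * (inv a * a)) z = 0 := by
      rintro z ⟨t, c, ht, hc, hca, rfl⟩
      show (inv (([]:List S).prod) * (t ++ [c]).prod) * (inv a * a) = 0
      rw [List.prod_nil, inv_one' hS, one_mul, List.prod_append, List.prod_singleton]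
      calc (t.prod * c) * (inv a * a) = t.prod * ((c * inv a) * a) := by
            simp only [mul_assoc]
        _ = 0 := by rw [hS.gen_zero c hc a ha hca, zero_mul, mul_zero]
    have hres := closure_const 0 (hr (inv a * a)) hconst h
    simp only [one_mul] at hres
    exact ea_ne_zero hS ha hres

lemma isolated_nonzero (hS : IsPolycyclicMonoid S inv Λ)
    (hl : ∀ a : S, Continuous (fun x : S => a * x))
    (hr : ∀ a : S, Continuous (fun x : S => x * a))
    {z : S} (hz : z ≠ 0) : IsOpen {z} := by
  obtain ⟨q, p, hq, hp, rfl⟩ := (STR hS z).resolve_left hz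
  set g : S → S := fun w => (q.prod * w) * inv p.prod with hg
  have gc : Continuous g := (hr (inv p.prod)).comp (hl q.prod)
  have gopen : IsOpen (g ⁻¹' {1}) := (isolated_one hS hl hr).preimage gc
  have hmemfib : E inv q p ∈ g ⁻¹' {1} := by
    show (q.prod * (inv q.prod * p.prod)) * inv p.prod = 1
    rw [wmi_pull hS hq]
    exact wmi hS hp
  have hfib_sub : g ⁻¹' {1} ⊆
      (fun n => E inv (q.drop n) (p.drop n)) '' (Set.Iic q.length) := by
    intro w hw
    simp only [Set.mem_preimage, Set.mem_singleton_iff] at hw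
    rcases STR hS w with rfl | ⟨s, t, hs, ht, rfl⟩
    · rw [hg] at hw
      simp only [mul_zero, zero_mul] at hw
      exact absurd hw hS.zero_ne_one
    have hw2 : (q.prod * inv s.prod) * (t.prod * inv p.prod) = 1 := by
      rw [← hw]
      show _ = (q.prod * (inv s.prod * t.prod)) * inv p.prod
      simp only [mul_assoc]
    have key : ∃ u, Wrd Λ u ∧ q = u ++ s ∧ p = u ++ t := by
      rcases CL hS s q hs hq with ⟨u, hu, hqe, hva⟩ | ⟨u, hu, hse, hva⟩ | ⟨hva, -⟩
      · rcases CL hS p t hp ht with ⟨v, hv, hte, hvb⟩ | ⟨v, hv, hpe, hvb⟩ | ⟨hvb, -⟩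
        · rw [hva, hvb] at hw2
          obtain ⟨hu0, hv0⟩ := prod_prod_one hS hu hv hw2
          subst hu0; subst hv0
          simp only [List.nil_append] at hqe hte
          exact ⟨[], by intro x hx; simp at hx, by simpa using hqe, by simpa using hte.symm⟩
        · rw [hva, hvb] at hw2
          have huv := cancel_one hS hu hv hw2
          subst huv
          exact ⟨u, hu, hqe, hpe⟩
        · rw [hva, hvb, mul_zero] at hw2
          exact absurd hw2 hS.zero_ne_one
      · rcases CL hS p t hp ht with ⟨v, hv, hte, hvb⟩ | ⟨v, hv, hpe, hvb⟩ | ⟨hvb, -⟩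
        · rw [hva, hvb] at hw2
          obtain ⟨hu0, hv0⟩ := inv_cancel_one hS hu hv hw2
          subst hu0; subst hv0
          simp only [List.nil_append] at hse hte
          exact ⟨[], by intro x hx; simp at hx, by simpa using hse.symm, by simpa using hte.symm⟩
        · rw [hva, hvb] at hw2
          obtain ⟨hu0, hv0⟩ := inv_inv_one hS hu hv hw2
          subst hu0; subst hv0
          simp only [List.nil_append] at hse hpe
          exact ⟨[], by intro x hx; simp at hx, by simpa using hse.symm, by simpa using hpe⟩
        · rw [hva, hvb, mul_zero] at hw2
          exact absurd hw2 hS.zero_ne_one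
      · rw [hva, zero_mul] at hw2
        exact absurd hw2 hS.zero_ne_one
    obtain ⟨u, hu, hqe, hpe⟩ := key
    refine ⟨u.length, ?_, ?_⟩
    · simp only [Set.mem_Iic, hqe, List.length_append]
      omega
    · simp only [hqe, hpe, List.drop_left]
  have ffin : (g ⁻¹' {1}).Finite :=
    ((Set.finite_Iic q.length).image _).subset hfib_sub
  have hopen2 : IsOpen (g ⁻¹' {1} ∩ (g ⁻¹' {1} \ {E inv q p})ᶜ) :=
    gopen.inter (ffin.subset Set.diff_subset).isClosed.isOpen_compl
  have heq : {E inv q p} = g ⁻¹' {1} ∩ (g ⁻¹' {1} \ {E inv q p})ᶜ := by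
    ext w
    constructor
    · intro hwmem
      rw [Set.mem_singleton_iff] at hwmem
      subst hwmem
      exact ⟨hmemfib, fun hc => hc.2 rfl⟩
    · rintro ⟨hw1, hw2⟩
      rw [Set.mem_singleton_iff]
      by_contra hne
      exact hw2 ⟨hw1, hne⟩
  rw [heq]
  exact hopen2

lemma trace_cofinite (hS : IsPolycyclicMonoid S inv Λ)
    (hl : ∀ a : S, Continuous (fun x : S => a * x))
    (hr : ∀ a : S, Continuous (fun x : S => x * a))
    {U V : Set S} (hUc : IsCompact U) (hV : IsOpen V) (h0 : (0:S) ∈ V) :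
    (U \ V).Finite := by
  have hK : IsCompact (U \ V) := hUc.diff hV
  have hcov : (U \ V) ⊆ ⋃ (x : {x : S // x ≠ 0}), {x.1} := by
    intro x hx
    have hx0 : x ≠ 0 := fun h => hx.2 (by rw [h]; exact h0)
    exact Set.mem_iUnion.2 ⟨⟨x, hx0⟩, rfl⟩
  obtain ⟨t, ht⟩ := hK.elim_finite_subcover (fun x : {x : S // x ≠ 0} => ({x.1} : Set S))
    (fun i => isolated_nonzero hS hl hr i.2) hcov
  refine Set.Finite.subset ?_ ht
  exact t.finite_toSet.biUnion fun i _ => Set.finite_singleton _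

lemma U0_infinite (hS : IsPolycyclicMonoid S inv Λ)
    (hl : ∀ a : S, Continuous (fun x : S => a * x))
    (hr : ∀ a : S, Continuous (fun x : S => x * a))
    (hnd : ¬ DiscreteTopology S)
    {U : Set S} (hU : U ∈ nhds (0:S)) : U.Infinite := by
  by_contra hinf
  rw [Set.not_infinite] at hinf
  have h1 : {(0:S)} ∈ nhds (0:S) := by
    have hcl : IsClosed (U \ {0} : Set S) := (hinf.subset Set.diff_subset).isClosed
    have hmem : U ∩ (U \ {0})ᶜ ∈ nhds (0:S) :=
      Filter.inter_mem hU (hcl.isOpen_compl.mem_nhds (by simp))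
    refine Filter.mem_of_superset hmem ?_
    rintro x ⟨hxU, hxc⟩
    simp only [Set.mem_singleton_iff]
    by_contra hx0
    exact hxc ⟨hxU, hx0⟩
  have h2 : IsOpen ({(0:S)} : Set S) := by
    rcases mem_nhds_iff.1 h1 with ⟨o, ho, hoo, ho0⟩
    rw [← subset_antisymm ho (Set.singleton_subset_iff.2 ho0)]
    exact hoo
  apply hnd
  apply discreteTopology_iff_isOpen_singleton.2
  intro x
  by_cases hx : x = 0
  · subst hx; exact h2
  · exact isolated_nonzero hS hl hr hx

lemma exists_infinite_class (hS : IsPolycyclicMonoid S inv Λ)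
    (hl : ∀ a : S, Continuous (fun x : S => a * x))
    (hr : ∀ a : S, Continuous (fun x : S => x * a))
    {U : Set S} (hUc : IsCompact U) (hU : U ∈ nhds (0:S))
    (hinf : (U \ {0}).Infinite) :
    ∃ s : List S, Wrd Λ s ∧ ((U \ {0}) ∩ Cls inv Λ s).Infinite := by
  by_contra hcon
  push_neg at hcon
  obtain ⟨a, ha, -⟩ := two_letters hS
  set W := interior U with hWdef
  have hW0 : (0:S) ∈ W := mem_interior_iff_mem_nhds.2 hU
  set F := U \ ((fun z => z * a) ⁻¹' W) with hFdef
  have hFfin : F.Finite := by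
    refine trace_cofinite hS hl hr hUc (isOpen_interior.preimage (hr a)) ?_
    show (0:S) ∈ (fun z => z * a) ⁻¹' W
    simp only [Set.mem_preimage, zero_mul]
    exact hW0
  have hcover : (U \ {0}) ⊆
      ⋃ z ∈ (F ∩ (U \ {0})), ((U \ {0}) ∩ Cls inv Λ (decomp inv Λ z).1) := by
    intro w hw
    have hw0 : w ≠ 0 := fun h => hw.2 (by rw [h]; rfl)
    obtain ⟨hqw, hpw, hdec⟩ := decomp_spec hS hw0
    set sw := (decomp inv Λ w).1 with hsw
    have hwc : w ∈ Cls inv Λ sw := ⟨_, hpw, hdec⟩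
    set T := ((U \ {0}) ∩ Cls inv Λ sw) with hT
    have hTfin : T.Finite := hcon sw hqw
    have hTne : T.Nonempty := ⟨w, hw, hwc⟩
    obtain ⟨zm, hzmT, hmax⟩ :=
      Set.Finite.exists_maximalFor (fun z => (decomp inv Λ z).2.length) T hTfin hTne
    obtain ⟨tm, htm, hzm⟩ := hzmT.2
    have hwa : Wrd Λ (tm ++ [a]) := Wrd.append htm (by
      intro x hx; simp at hx; subst hx; exact ha)
    have hzmF : zm ∈ F := by
      by_contra hnF
      have hpre : zm ∈ (fun z => z * a) ⁻¹' W := by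
        by_contra hnp
        exact hnF ⟨hzmT.1.1, hnp⟩
      have hin : zm * a ∈ W := hpre
      have hform : zm * a = E inv sw (tm ++ [a]) := by
        rw [hzm]; exact E_mul_letter a
      have hTmem : zm * a ∈ T := by
        refine ⟨⟨interior_subset hin, ?_⟩, ⟨tm ++ [a], hwa, hform⟩⟩
        simp only [Set.mem_singleton_iff]
        rw [hform]
        exact E_ne_zero hS hqw hwa
      have hle : (decomp inv Λ zm).2.length ≤ (decomp inv Λ (zm * a)).2.length →
          (decomp inv Λ (zm * a)).2.length ≤ (decomp inv Λ zm).2.length := hmax (j := zm * a) hTmem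
      have d1 : (decomp inv Λ zm).2 = tm := by
        rw [hzm, decomp_eq hS hqw htm]
      have d2 : (decomp inv Λ (zm * a)).2 = tm ++ [a] := by
        rw [hform, decomp_eq hS hqw hwa]
      rw [d1, d2] at hle
      simp only [List.length_append, List.length_cons, List.length_nil] at hle
      have := hle (by omega)
      omega
    have d0 : (decomp inv Λ zm).1 = sw := by
      rw [hzm, decomp_eq hS hqw htm]
    refine Set.mem_biUnion ⟨hzmF, hzmT.1⟩ ?_
    rw [d0]
    exact ⟨hw, hwc⟩
  have hfin : (U \ {0}).Finite := by
    refine Set.Finite.subset ?_ hcover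
    refine Set.Finite.biUnion (hFfin.inter_of_left _) ?_
    intro z hz
    have hz0 : z ≠ 0 := fun h => hz.2.2 (by rw [h]; rfl)
    exact hcon _ (decomp_spec hS hz0).1
  exact hinf hfin

end Topology

end PolyAux

/-- A compact neighborhood of zero in a non-discrete locally compact
semitopological polycyclic monoid meets every non-zero Green R-class in an
infinite set. -/
theorem stmt8 {S : Type*} [MonoidWithZero S] (inv : S → S) (Λ : Set S)
    (hS : IsPolycyclicMonoid S inv Λ)
    [TopologicalSpace S] [T2Space S] [LocallyCompactSpace S]
    (hl : ∀ a : S, Continuous (fun x : S => a * x))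
    (hr : ∀ a : S, Continuous (fun x : S => x * a))
    (hnd : ¬ DiscreteTopology S)
    (U₀ : Set S) (hU : U₀ ∈ nhds (0 : S)) (hUc : IsCompact U₀) :
    ∀ a : S, a ≠ 0 → (U₀ ∩ greenR a).Infinite := by
  intro a0 ha0
  obtain ⟨q, p, hq, hp, rfl⟩ := (PolyAux.STR hS a0).resolve_left ha0
  have hUinf : U₀.Infinite := PolyAux.U0_infinite hS hl hr hnd hU
  have hUinf' : (U₀ \ {0}).Infinite := hUinf.diff (Set.finite_singleton 0)
  obtain ⟨s, hs, hsinf⟩ := PolyAux.exists_infinite_class hS hl hr hUc hU hUinf'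
  have key : (U₀ ∩ PolyAux.Cls inv Λ q).Infinite := by
    by_contra hG
    rw [Set.not_infinite] at hG
    have hW0 : (0:S) ∈ interior U₀ := mem_interior_iff_mem_nhds.2 hU
    set α := PolyAux.E inv q s with hα
    have hVo : IsOpen (interior U₀ \ (U₀ ∩ PolyAux.Cls inv Λ q)) :=
      isOpen_interior.sdiff hG.isClosed
    have hV0 : (0:S) ∈ interior U₀ \ (U₀ ∩ PolyAux.Cls inv Λ q) := by
      refine ⟨hW0, fun hmem => ?_⟩
      obtain ⟨t, ht, h0⟩ := hmem.2
      exact PolyAux.E_ne_zero hS hq ht h0.symm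
    have hPre : IsOpen ((fun z => α * z) ⁻¹'
        (interior U₀ \ (U₀ ∩ PolyAux.Cls inv Λ q))) := hVo.preimage (hl α)
    have hPre0 : (0:S) ∈ (fun z => α * z) ⁻¹'
        (interior U₀ \ (U₀ ∩ PolyAux.Cls inv Λ q)) := by
      simp only [Set.mem_preimage, mul_zero]
      exact hV0
    have hfin2 := PolyAux.trace_cofinite hS hl hr hUc hPre hPre0
    obtain ⟨z, hz1, hz2⟩ := (hsinf.diff hfin2).nonempty
    have hzP : z ∈ (fun z => α * z) ⁻¹'
        (interior U₀ \ (U₀ ∩ PolyAux.Cls inv Λ q)) := by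
      by_contra hnp
      exact hz2 ⟨hz1.1.1, hnp⟩
    obtain ⟨t, ht, hzform⟩ := hz1.2
    have himg : α * z = PolyAux.E inv q t := by
      rw [hzform, hα]
      exact PolyAux.E_push hS q t hs
    have h1 : PolyAux.E inv q t ∈ interior U₀ \ (U₀ ∩ PolyAux.Cls inv Λ q) := by
      rw [← himg]
      exact hzP
    exact h1.2 ⟨interior_subset h1.1, ⟨t, ht, rfl⟩⟩
  refine key.mono ?_
  rintro x ⟨hxU, t, ht, rfl⟩
  exact ⟨hxU, PolyAux.mem_greenR_of_cls hS hq hp ht⟩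
end

section
/- Let S be a non-discrete locally compact semitopological polycyclic monoid with finite generating set Λ, and let U₀ be a compact neighborhood of the zero 0 in S. Then U₀ contains all but finitely many elements of the Green R-class R_1 = {x ∈ S : xS = S} of the unit. -/
set_option linter.unusedSectionVars false


namespace Stmt9Aux

variable {S : Type*} [MonoidWithZero S]

/-- product of a word, list stores the word reversed (head = last letter) -/
def rowP : List S → S
  | [] => 1
  | a :: l => rowP l * a

/-- inverse word product, same reversed storage -/
def colQ (inv : S → S) : List S → S
  | [] => 1
  | a :: l => inv a * colQ inv l

@[simp] lemma rowP_nil : rowP ([] : List S) = 1 := rfl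
@[simp] lemma rowP_cons (a : S) (l : List S) : rowP (a :: l) = rowP l * a := rfl
@[simp] lemma colQ_nil (inv : S → S) : colQ inv ([] : List S) = 1 := rfl
@[simp] lemma colQ_cons (inv : S → S) (a : S) (l : List S) :
    colQ inv (a :: l) = inv a * colQ inv l := rfl

lemma rowP_append (l₁ l₂ : List S) : rowP (l₁ ++ l₂) = rowP l₂ * rowP l₁ := by
  induction l₁ with
  | nil => simp
  | cons a l ih => simp [ih, mul_assoc]

lemma colQ_append (inv : S → S) (l₁ l₂ : List S) :
    colQ inv (l₁ ++ l₂) = colQ inv l₁ * colQ inv l₂ := by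
  induction l₁ with
  | nil => simp
  | cons a l ih => simp [ih, mul_assoc]

/-- all letters in Λ -/
def GoodW (Λ : Set S) (l : List S) : Prop := ∀ x ∈ l, x ∈ Λ

lemma GoodW.of_cons {Λ : Set S} {a : S} {l : List S} (h : GoodW Λ (a :: l)) :
    a ∈ Λ ∧ GoodW Λ l :=
  ⟨h a List.mem_cons_self, fun x hx => h x (List.mem_cons_of_mem a hx)⟩

lemma GoodW.append {Λ : Set S} {l₁ l₂ : List S} (h₁ : GoodW Λ l₁) (h₂ : GoodW Λ l₂) :
    GoodW Λ (l₁ ++ l₂) := fun x hx => (List.mem_append.1 hx).elim (h₁ x) (h₂ x)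

lemma GoodW.of_append_left {Λ : Set S} {l₁ l₂ : List S} (h : GoodW Λ (l₁ ++ l₂)) :
    GoodW Λ l₁ := fun x hx => h x (List.mem_append.2 (Or.inl hx))

lemma GoodW.of_append_right {Λ : Set S} {l₁ l₂ : List S} (h : GoodW Λ (l₁ ++ l₂)) :
    GoodW Λ l₂ := fun x hx => h x (List.mem_append.2 (Or.inr hx))

variable {inv : S → S} {Λ : Set S}

lemma rowP_colQ (hS : IsPolycyclicMonoid S inv Λ) {l : List S} (hl : GoodW Λ l) :
    rowP l * colQ inv l = 1 := by
  induction l with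
  | nil => simp
  | cons a l ih =>
    obtain ⟨ha, hl'⟩ := hl.of_cons
    rw [rowP_cons, colQ_cons, mul_assoc, ← mul_assoc a, hS.gen_unit a ha, one_mul, ih hl']

lemma mixed (hS : IsPolycyclicMonoid S inv Λ) :
    ∀ p q : List S, GoodW Λ p → GoodW Λ q →
    (∃ r, p = q ++ r ∧ rowP p * colQ inv q = rowP r) ∨
    (∃ r, q = p ++ r ∧ rowP p * colQ inv q = colQ inv r) ∨
    rowP p * colQ inv q = 0 := by
  intro p
  induction p with
  | nil =>
    intro q hp hq
    cases q with
    | nil => exact Or.inl ⟨[], rfl, by simp⟩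
    | cons b m => exact Or.inr (Or.inl ⟨b :: m, rfl, by simp⟩)
  | cons a l ih =>
    intro q hp hq
    cases q with
    | nil => exact Or.inl ⟨a :: l, rfl, by simp⟩
    | cons b m =>
      obtain ⟨ha, hl⟩ := hp.of_cons
      obtain ⟨hb, hm⟩ := hq.of_cons
      have hkey : rowP (a :: l) * colQ inv (b :: m) = rowP l * ((a * inv b) * colQ inv m) := by
        rw [rowP_cons, colQ_cons]
        rw [mul_assoc, ← mul_assoc a]
      by_cases hab : a = b
      · subst hab
        rw [hS.gen_unit a ha, one_mul] at hkey
        rcases ih m hl hm with ⟨r, hr, he⟩ | ⟨r, hr, he⟩ | he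
        · exact Or.inl ⟨r, by rw [hr]; rfl, by rw [hkey, he]⟩
        · exact Or.inr (Or.inl ⟨r, by rw [hr]; rfl, by rw [hkey, he]⟩)
        · exact Or.inr (Or.inr (by rw [hkey, he]))
      · rw [hS.gen_zero a ha b hb hab, zero_mul, mul_zero] at hkey
        exact Or.inr (Or.inr hkey)

lemma elem_one (hS : IsPolycyclicMonoid S inv Λ) {q p : List S}
    (hq : GoodW Λ q) (hp : GoodW Λ p) :
    rowP q * (colQ inv q * rowP p) * colQ inv p = 1 := by
  calc rowP q * (colQ inv q * rowP p) * colQ inv p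
      = (rowP q * colQ inv q) * (rowP p * colQ inv p) := by
        rw [mul_assoc, mul_assoc, mul_assoc]
    _ = 1 := by rw [rowP_colQ hS hq, rowP_colQ hS hp, one_mul]

lemma elem_ne_zero (hS : IsPolycyclicMonoid S inv Λ) {q p : List S}
    (hq : GoodW Λ q) (hp : GoodW Λ p) : colQ inv q * rowP p ≠ 0 := by
  intro h
  have h1 := elem_one hS hq hp
  rw [h, mul_zero, zero_mul] at h1
  exact hS.zero_ne_one h1

lemma normal_form (hS : IsPolycyclicMonoid S inv Λ) (x : S) :
    x = 0 ∨ ∃ q p, GoodW Λ q ∧ GoodW Λ p ∧ x = colQ inv q * rowP p := by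
  have hx : x ∈ Subsemigroup.closure (Λ ∪ inv '' Λ) := by
    rw [hS.generates]; trivial
  induction hx using Subsemigroup.closure_induction with
  | mem y hy =>
    rcases hy with hy | ⟨z, hz, rfl⟩
    · exact Or.inr ⟨[], [y], fun c hc => absurd hc List.not_mem_nil,
        fun c hc => (List.mem_singleton.1 hc) ▸ hy, by simp⟩
    · exact Or.inr ⟨[z], [], fun c hc => (List.mem_singleton.1 hc) ▸ hz,
        fun c hc => absurd hc List.not_mem_nil, by simp⟩
  | mul y z hy hz ihy ihz =>
    rcases ihy with rfl | ⟨q, p, hq, hp, rfl⟩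
    · exact Or.inl (zero_mul _)
    rcases ihz with rfl | ⟨q', p', hq', hp', rfl⟩
    · exact Or.inl (mul_zero _)
    have hassoc : colQ inv q * rowP p * (colQ inv q' * rowP p')
        = colQ inv q * ((rowP p * colQ inv q') * rowP p') := by
      rw [mul_assoc, ← mul_assoc (rowP p)]
    rcases mixed hS p q' hp hq' with ⟨r, hr, he⟩ | ⟨r, hr, he⟩ | he
    · refine Or.inr ⟨q, p' ++ r, hq, hp'.append (hr ▸ hp).of_append_right, ?_⟩
      rw [hassoc, he, rowP_append]
    · refine Or.inr ⟨q ++ r, p', hq.append (hr ▸ hq').of_append_right, hp', ?_⟩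
      rw [hassoc, he, colQ_append, mul_assoc]
    · exact Or.inl (by rw [hassoc, he, zero_mul, mul_zero])

lemma exists_two (hS : IsPolycyclicMonoid S inv Λ) : ∃ e ∈ Λ, ∃ f ∈ Λ, e ≠ f := by
  by_contra hcon
  push_neg at hcon
  -- degenerate mixed: never zero
  have mix : ∀ p q : List S, GoodW Λ p → GoodW Λ q →
      (∃ r, GoodW Λ r ∧ rowP p * colQ inv q = rowP r) ∨
      (∃ r, GoodW Λ r ∧ rowP p * colQ inv q = colQ inv r) := by
    intro p
    induction p with
    | nil =>
      intro q hp hq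
      cases q with
      | nil => exact Or.inl ⟨[], hp, by simp⟩
      | cons b m => exact Or.inr ⟨b :: m, hq, by simp⟩
    | cons a l ih =>
      intro q hp hq
      cases q with
      | nil => exact Or.inl ⟨a :: l, hp, by simp⟩
      | cons b m =>
        obtain ⟨ha, hl⟩ := hp.of_cons
        obtain ⟨hb, hm⟩ := hq.of_cons
        have hab : a = b := hcon a ha b hb
        subst hab
        have hkey : rowP (a :: l) * colQ inv (a :: m) = rowP l * colQ inv m := by
          rw [rowP_cons, colQ_cons, mul_assoc, ← mul_assoc a, hS.gen_unit a ha, one_mul]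
        rcases ih m hl hm with ⟨r, hr, he⟩ | ⟨r, hr, he⟩
        · exact Or.inl ⟨r, hr, by rw [hkey, he]⟩
        · exact Or.inr ⟨r, hr, by rw [hkey, he]⟩
  have nf : ∀ x ∈ Subsemigroup.closure (Λ ∪ inv '' Λ),
      ∃ q p, GoodW Λ q ∧ GoodW Λ p ∧ x = colQ inv q * rowP p := by
    intro x hx
    induction hx using Subsemigroup.closure_induction with
    | mem y hy =>
      rcases hy with hy | ⟨z, hz, rfl⟩
      · exact ⟨[], [y], fun c hc => absurd hc List.not_mem_nil,
          fun c hc => (List.mem_singleton.1 hc) ▸ hy, by simp⟩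
      · exact ⟨[z], [], fun c hc => (List.mem_singleton.1 hc) ▸ hz,
          fun c hc => absurd hc List.not_mem_nil, by simp⟩
    | mul y z hy hz ihy ihz =>
      obtain ⟨q, p, hq, hp, rfl⟩ := ihy
      obtain ⟨q', p', hq', hp', rfl⟩ := ihz
      have hassoc : colQ inv q * rowP p * (colQ inv q' * rowP p')
          = colQ inv q * ((rowP p * colQ inv q') * rowP p') := by
        rw [mul_assoc, ← mul_assoc (rowP p)]
      rcases mix p q' hp hq' with ⟨r, hr, he⟩ | ⟨r, hr, he⟩
      · exact ⟨q, p' ++ r, hq, hp'.append hr, by rw [hassoc, he, rowP_append]⟩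
      · exact ⟨q ++ r, p', hq.append hr, hp', by rw [hassoc, he, colQ_append, mul_assoc]⟩
  have h0 : (0 : S) ∈ Subsemigroup.closure (Λ ∪ inv '' Λ) := by rw [hS.generates]; trivial
  obtain ⟨q, p, hq, hp, h0'⟩ := nf 0 h0
  exact elem_ne_zero hS hq hp h0'.symm

lemma colQ_rowP_ne_one (hS : IsPolycyclicMonoid S inv Λ) :
    ∀ l : List S, GoodW Λ l → l ≠ [] → colQ inv l * rowP l ≠ 1 := by
  intro l
  induction l with
  | nil => intro _ h; exact absurd rfl h
  | cons a l ih =>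
    intro hl _ h1
    obtain ⟨ha, hl'⟩ := hl.of_cons
    -- h1 : inv a * colQ l * (rowP l * a) = 1
    have hX : colQ inv l * rowP l = 1 := by
      have h2 : a * (colQ inv (a :: l) * rowP (a :: l)) * inv a = a * 1 * inv a := by rw [h1]
      have h3 : a * (colQ inv (a :: l) * rowP (a :: l)) * inv a
          = (a * inv a) * (colQ inv l * rowP l) * (a * inv a) := by
        rw [colQ_cons, rowP_cons]
        simp only [mul_assoc]
      have h4 := h3.symm.trans h2
      rw [mul_one] at h4
      rw [hS.gen_unit a ha] at h4
      rw [one_mul, mul_one] at h4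
      exact h4
    cases l with
    | nil =>
      have hinva : inv a * a = 1 := by
        have := h1
        rw [colQ_cons, rowP_cons, colQ_nil, rowP_nil, mul_one, one_mul] at this
        exact this
      obtain ⟨e, he, f, hf, hef⟩ := exists_two hS
      have hk : ∃ k ∈ Λ, k ≠ a := by
        by_cases hae : a = e
        · exact ⟨f, hf, fun h => hef (hae ▸ h.symm)⟩
        · exact ⟨e, he, fun h => hae h.symm⟩
      obtain ⟨k, hkΛ, hka⟩ := hk
      have h5 : k * inv a = 0 := hS.gen_zero k hkΛ a ha hka
      have h6 : k = 0 := by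
        calc k = k * (inv a * a) := by rw [hinva, mul_one]
        _ = (k * inv a) * a := by rw [mul_assoc]
        _ = 0 := by rw [h5, zero_mul]
      have h7 := hS.gen_unit k hkΛ
      rw [h6, zero_mul] at h7
      exact hS.zero_ne_one h7
    | cons b m => exact ih hl' (by simp) hX

lemma rowP_eq_one (hS : IsPolycyclicMonoid S inv Λ) {l : List S} (hl : GoodW Λ l)
    (h1 : rowP l = 1) : l = [] := by
  by_contra hne
  have h2 : colQ inv l = 1 := by
    have h3 := rowP_colQ hS hl
    rw [h1, one_mul] at h3
    exact h3
  exact colQ_rowP_ne_one hS l hl hne (by rw [h2, h1, one_mul])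

lemma colQ_eq_one (hS : IsPolycyclicMonoid S inv Λ) {l : List S} (hl : GoodW Λ l)
    (h1 : colQ inv l = 1) : l = [] := by
  have h2 : rowP l = 1 := by
    have h3 := rowP_colQ hS hl
    rw [h1, mul_one] at h3
    exact h3
  exact rowP_eq_one hS hl h2

lemma rowP_ne_zero (hS : IsPolycyclicMonoid S inv Λ) {l : List S} (hl : GoodW Λ l) :
    rowP l ≠ 0 := by
  intro h
  have h3 := rowP_colQ hS hl
  rw [h, zero_mul] at h3
  exact hS.zero_ne_one h3

lemma colQ_ne_zero (hS : IsPolycyclicMonoid S inv Λ) {l : List S} (hl : GoodW Λ l) :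
    colQ inv l ≠ 0 := by
  intro h
  have h3 := rowP_colQ hS hl
  rw [h, mul_zero] at h3
  exact hS.zero_ne_one h3

/-- rowP m * colQ p = 1 implies m = p -/
lemma pq_one (hS : IsPolycyclicMonoid S inv Λ) {m p : List S} (hm : GoodW Λ m)
    (hp : GoodW Λ p) (h : rowP m * colQ inv p = 1) : m = p := by
  rcases mixed hS m p hm hp with ⟨r, hr, he⟩ | ⟨r, hr, he⟩ | he
  · have hrg : GoodW Λ r := (hr ▸ hm).of_append_right
    have : r = [] := rowP_eq_one hS hrg (by rw [← he, h])
    rw [this, List.append_nil] at hr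
    exact hr
  · have hrg : GoodW Λ r := (hr ▸ hp).of_append_right
    have : r = [] := colQ_eq_one hS hrg (by rw [← he, h])
    rw [this, List.append_nil] at hr
    exact hr.symm
  · rw [he] at h
    exact absurd h hS.zero_ne_one

lemma rowP_inj (hS : IsPolycyclicMonoid S inv Λ) {a b : List S} (ha : GoodW Λ a)
    (hb : GoodW Λ b) (h : rowP a = rowP b) : a = b := by
  have h1 : rowP b * colQ inv a = 1 := by rw [← h]; exact rowP_colQ hS ha
  exact (pq_one hS hb ha h1).symm

lemma colQ_inj (hS : IsPolycyclicMonoid S inv Λ) {a b : List S} (ha : GoodW Λ a)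
    (hb : GoodW Λ b) (h : colQ inv a = colQ inv b) : a = b := by
  have h1 : rowP a * colQ inv b = 1 := by rw [← h]; exact rowP_colQ hS ha
  exact pq_one hS ha hb h1

/-- colQ q * rowP m = 1 implies both empty -/
lemma qp_one (hS : IsPolycyclicMonoid S inv Λ) {q m : List S} (hq : GoodW Λ q)
    (hm : GoodW Λ m) (h : colQ inv q * rowP m = 1) : q = [] ∧ m = [] := by
  have h2 : colQ inv q = colQ inv m := by
    have h3 : (colQ inv q * rowP m) * colQ inv m = 1 * colQ inv m := by rw [h]
    rw [mul_assoc, rowP_colQ hS hm, mul_one, one_mul] at h3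
    exact h3
  have hqm : q = m := colQ_inj hS hq hm h2
  subst hqm
  by_cases hq0 : q = []
  · exact ⟨hq0, hq0⟩
  · exact absurd h (colQ_rowP_ne_one hS q hq hq0)

lemma elem_inj (hS : IsPolycyclicMonoid S inv Λ) {q p q' p' : List S}
    (hq : GoodW Λ q) (hp : GoodW Λ p) (hq' : GoodW Λ q') (hp' : GoodW Λ p')
    (h : colQ inv q * rowP p = colQ inv q' * rowP p') : q = q' ∧ p = p' := by
  have key : rowP p' = (rowP q' * colQ inv q) * rowP p := by
    calc rowP p' = (rowP q' * colQ inv q') * rowP p' := by rw [rowP_colQ hS hq', one_mul]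
    _ = rowP q' * (colQ inv q' * rowP p') := by rw [mul_assoc]
    _ = rowP q' * (colQ inv q * rowP p) := by rw [← h]
    _ = (rowP q' * colQ inv q) * rowP p := by rw [mul_assoc]
  -- helper: from equal elems with Q' = Q ++ r, P' = P ++ r derive r = []
  have helper : ∀ Q P r : List S, GoodW Λ Q → GoodW Λ P → GoodW Λ r →
      colQ inv Q * rowP P = colQ inv (Q ++ r) * rowP (P ++ r) → r = [] := by
    intro Q P r hQ hP hrg heq
    have hT : rowP Q * (colQ inv Q * rowP P) * colQ inv P = 1 := elem_one hS hQ hP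
    rw [heq] at hT
    rw [colQ_append, rowP_append] at hT
    have hT2 : rowP Q * (colQ inv Q * colQ inv r * (rowP r * rowP P)) * colQ inv P
        = colQ inv r * rowP r := by
      calc rowP Q * (colQ inv Q * colQ inv r * (rowP r * rowP P)) * colQ inv P
          = (rowP Q * colQ inv Q) * (colQ inv r * rowP r) * (rowP P * colQ inv P) := by
            simp only [mul_assoc]
      _ = colQ inv r * rowP r := by rw [rowP_colQ hS hQ, rowP_colQ hS hP, one_mul, mul_one]
    rw [hT2] at hT
    by_contra hrne
    exact colQ_rowP_ne_one hS r hrg hrne hT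
  rcases mixed hS q' q hq' hq with ⟨r, hr, he⟩ | ⟨r, hr, he⟩ | he
  · -- q' = q ++ r
    have hrg : GoodW Λ r := (hr ▸ hq').of_append_right
    rw [he] at key
    have hpp : p' = p ++ r := by
      apply rowP_inj hS hp' (hp.append hrg)
      rw [key, rowP_append]
    have hr0 : r = [] := by
      apply helper q p r hq hp hrg
      rw [← hr, ← hpp]
      exact h
    rw [hr0, List.append_nil] at hr hpp
    exact ⟨hr.symm, hpp.symm⟩
  · -- q = q' ++ r
    have hrg : GoodW Λ r := (hr ▸ hq).of_append_right
    rw [he] at key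
    have hpp : p = p' ++ r := by
      apply rowP_inj hS hp (hp'.append hrg)
      have h5 : rowP r * rowP p' = rowP p := by
        rw [key, ← mul_assoc, rowP_colQ hS hrg, one_mul]
      rw [rowP_append, h5]
    have hr0 : r = [] := by
      apply helper q' p' r hq' hp' hrg
      rw [← hr, ← hpp]
      exact h.symm
    rw [hr0, List.append_nil] at hr hpp
    exact ⟨hr, hpp⟩
  · rw [he, zero_mul] at key
    exact absurd key (rowP_ne_zero hS hp')

/-- elements of the R-class of 1 are products of generators -/
lemma greenR_one_sub (hS : IsPolycyclicMonoid S inv Λ) {x : S} (hx : x ∈ greenR (1 : S)) :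
    ∃ w, GoodW Λ w ∧ x = rowP w := by
  have h1 : (1 : S) ∈ {t | ∃ s, t = x * s} := by
    rw [show {t | ∃ s, t = x * s} = {t | ∃ s, t = 1 * s} from hx]
    exact ⟨1, by rw [one_mul]⟩
  obtain ⟨s, hs⟩ := h1
  rcases normal_form hS x with rfl | ⟨q, p, hq, hp, rfl⟩
  · rw [zero_mul] at hs
    exact absurd hs (Ne.symm hS.zero_ne_one)
  rcases normal_form hS s with rfl | ⟨a, b, ha, hb, rfl⟩
  · rw [mul_zero] at hs
    exact absurd hs (Ne.symm hS.zero_ne_one)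
  have hassoc : colQ inv q * rowP p * (colQ inv a * rowP b)
      = colQ inv q * (rowP p * colQ inv a * rowP b) := by
    rw [mul_assoc, ← mul_assoc (rowP p)]
  rcases mixed hS p a hp ha with ⟨r, hr, he⟩ | ⟨r, hr, he⟩ | he
  · have hrg : GoodW Λ r := (hr ▸ hp).of_append_right
    have h2 : colQ inv q * rowP (b ++ r) = 1 := by
      rw [rowP_append]
      calc colQ inv q * (rowP r * rowP b)
          = colQ inv q * ((rowP p * colQ inv a) * rowP b) := by rw [he]
        _ = colQ inv q * rowP p * (colQ inv a * rowP b) := by simp only [mul_assoc]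
        _ = 1 := hs.symm
    have h3 := qp_one hS hq (hb.append hrg) h2
    refine ⟨p, hp, ?_⟩
    rw [h3.1, colQ_nil, one_mul]
  · have hrg : GoodW Λ r := (hr ▸ ha).of_append_right
    have h2 : colQ inv (q ++ r) * rowP b = 1 := by
      rw [colQ_append]
      calc colQ inv q * colQ inv r * rowP b
          = colQ inv q * ((rowP p * colQ inv a) * rowP b) := by rw [he, mul_assoc]
        _ = colQ inv q * rowP p * (colQ inv a * rowP b) := by simp only [mul_assoc]
        _ = 1 := hs.symm
    have h3 := qp_one hS (hq.append hrg) hb h2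
    have hq0 : q = [] := (List.append_eq_nil_iff.mp h3.1).1
    refine ⟨p, hp, ?_⟩
    rw [hq0, colQ_nil, one_mul]
  · rw [hassoc, he, zero_mul, mul_zero] at hs
    exact absurd hs (Ne.symm hS.zero_ne_one)

section Topo

variable [TopologicalSpace S] [T2Space S]

lemma isolated_one (hS : IsPolycyclicMonoid S inv Λ)
    (hlc : ∀ a : S, Continuous (fun x : S => a * x))
    (hrc : ∀ a : S, Continuous (fun x : S => x * a)) :
    IsOpen {(1 : S)} := by
  obtain ⟨e, he, f, hf, hef⟩ := exists_two hS
  obtain ⟨U, V, hUo, hVo, h1U, h0V, hUV⟩ := t2_separation (Ne.symm hS.zero_ne_one)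
  have h0U : (0 : S) ∉ U := fun h => Set.disjoint_left.mp hUV h h0V
  have hcont : ∀ h : S, Continuous (fun x : S => h * x * inv h) :=
    fun h => (hrc (inv h)).comp (hlc h)
  set W := ((fun x : S => e * x * inv e) ⁻¹' U) ∩ ((fun x : S => f * x * inv f) ⁻¹' U) with hW
  have hWo : IsOpen W := ((hUo.preimage (hcont e))).inter (hUo.preimage (hcont f))
  have h1W : (1 : S) ∈ W := by
    constructor
    · show e * 1 * inv e ∈ U
      rw [mul_one, hS.gen_unit e he]
      exact h1U
    · show f * 1 * inv f ∈ U
      rw [mul_one, hS.gen_unit f hf]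
      exact h1U
  have hsub : W ⊆ {(1 : S)} := by
    intro x hx
    obtain ⟨hxe, hxf⟩ := hx
    have hxe' : e * x * inv e ∈ U := hxe
    have hxf' : f * x * inv f ∈ U := hxf
    have hne : ∀ h : S, h * x * inv h ∈ U → h * x * inv h ≠ 0 :=
      fun h hmem h0 => h0U (h0 ▸ hmem)
    rcases normal_form hS x with rfl | ⟨q, p, hq, hp, rfl⟩
    · exact absurd (by rw [mul_zero, zero_mul] : e * (0:S) * inv e = 0) (hne e hxe')
    have claimq : ∀ c q', q = c :: q' → False := by
      intro c q' hqc
      subst hqc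
      obtain ⟨hc, hq'⟩ := hq.of_cons
      have hcomp : ∀ h ∈ Λ, h ≠ c → h * (colQ inv (c :: q') * rowP p) * inv h = 0 := by
        intro h hh hhc
        have : h * (colQ inv (c :: q') * rowP p) = ((h * inv c) * (colQ inv q' * rowP p)) := by
          rw [colQ_cons]
          simp only [mul_assoc]
        rw [this, hS.gen_zero h hh c hc hhc, zero_mul, zero_mul]
      have hce : c = e := by
        by_contra hcc
        exact hne e hxe' (hcomp e he (fun hh => hcc hh.symm))
      have hcf : c = f := by
        by_contra hcc
        exact hne f hxf' (hcomp f hf (fun hh => hcc hh.symm))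
      exact hef (hce ▸ hcf)
    have hq0 : q = [] := by
      cases q with
      | nil => rfl
      | cons c q' => exact absurd (claimq c q' rfl) (fun h => h)
    subst hq0
    have claimp : ∀ c p', p = c :: p' → False := by
      intro c p' hpc
      subst hpc
      obtain ⟨hc, hp'⟩ := hp.of_cons
      have hcomp : ∀ h ∈ Λ, h ≠ c → h * (colQ inv [] * rowP (c :: p')) * inv h = 0 := by
        intro h hh hhc
        have hci : c * inv h = 0 := hS.gen_zero c hc h hh (fun hcc => hhc hcc.symm)
        have : h * (colQ inv [] * rowP (c :: p')) * inv h
            = (h * rowP p') * (c * inv h) := by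
          rw [colQ_nil, one_mul, rowP_cons]
          simp only [mul_assoc]
        rw [this, hci, mul_zero]
      have hce : c = e := by
        by_contra hcc
        exact hne e hxe' (hcomp e he (fun hh => hcc hh.symm))
      have hcf : c = f := by
        by_contra hcc
        exact hne f hxf' (hcomp f hf (fun hh => hcc hh.symm))
      exact hef (hce ▸ hcf)
    have hp0 : p = [] := by
      cases p with
      | nil => rfl
      | cons c p' => exact absurd (claimp c p' rfl) (fun h => h)
    subst hp0
    simp
  have : W = {(1 : S)} := Set.Subset.antisymm hsub (by intro x hx; rw [hx]; exact h1W)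
  exact this ▸ hWo

lemma isolated_ne_zero (hS : IsPolycyclicMonoid S inv Λ)
    (hlc : ∀ a : S, Continuous (fun x : S => a * x))
    (hrc : ∀ a : S, Continuous (fun x : S => x * a))
    {u : S} (hu : u ≠ 0) : IsOpen {u} := by
  rcases normal_form hS u with rfl | ⟨q, p, hq, hp, rfl⟩
  · exact absurd rfl hu
  set χ := fun x : S => rowP q * x * colQ inv p with hχ
  have hχc : Continuous χ := (hrc (colQ inv p)).comp (hlc (rowP q))
  set Fib := χ ⁻¹' {(1 : S)} with hFib
  have hFibo : IsOpen Fib := (isolated_one hS hlc hrc).preimage hχc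
  have huFib : colQ inv q * rowP p ∈ Fib := by
    simp only [hFib, Set.mem_preimage, hχ, Set.mem_singleton_iff]
    exact elem_one hS hq hp
  set G := fun j : ℕ => colQ inv (q.take j) * rowP (p.take (p.length - (q.length - j))) with hG
  have hufix : colQ inv q * rowP p = G q.length := by
    rw [hG]
    simp
  have hFibsub : Fib ⊆ G '' (Set.Iic q.length) := by
    intro x hx
    have hx1 : rowP q * x * colQ inv p = 1 := hx
    have hxne : x ≠ 0 := by
      intro h0
      rw [h0, mul_zero, zero_mul] at hx1
      exact hS.zero_ne_one hx1
    rcases normal_form hS x with rfl | ⟨a, b, ha, hb, rfl⟩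
    · exact absurd rfl hxne
    have hgrp : (rowP q * colQ inv a) * (rowP b * colQ inv p) = 1 := by
      rw [← hx1]; simp only [mul_assoc]
    rcases mixed hS q a hq ha with ⟨r, hqar, hemix⟩ | ⟨r, har, hemix⟩ | hemix
    · -- q = a ++ r
      have hrg : GoodW Λ r := (hqar ▸ hq).of_append_right
      have h2 : rowP (b ++ r) * colQ inv p = 1 := by
        rw [rowP_append]
        calc rowP r * rowP b * colQ inv p = rowP r * (rowP b * colQ inv p) := by
              rw [mul_assoc]
          _ = (rowP q * colQ inv a) * (rowP b * colQ inv p) := by rw [hemix]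
          _ = 1 := hgrp
      have hbr : b ++ r = p := pq_one hS (hb.append hrg) hp h2
      refine ⟨a.length, ?_, ?_⟩
      · rw [Set.mem_Iic, hqar, List.length_append]
        exact Nat.le_add_right _ _
      · rw [hG]
        have h3 : q.take a.length = a := by rw [hqar]; exact List.take_left
        have h4 : q.length - a.length = r.length := by
          rw [hqar, List.length_append]; omega
        have h5 : p.length - r.length = b.length := by
          rw [← hbr, List.length_append]; omega
        show colQ inv (q.take a.length)
            * rowP (p.take (p.length - (q.length - a.length))) = colQ inv a * rowP b
        rw [h3, h4, h5, ← hbr, List.take_left]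
    · -- a = q ++ r
      have hrg : GoodW Λ r := (har ▸ ha).of_append_right
      have h5 : rowP b * colQ inv p = rowP r := by
        calc rowP b * colQ inv p
            = rowP r * (colQ inv r * (rowP b * colQ inv p)) := by
              rw [← mul_assoc, rowP_colQ hS hrg, one_mul]
          _ = rowP r * ((rowP q * colQ inv a) * (rowP b * colQ inv p)) := by rw [hemix]
          _ = rowP r := by rw [hgrp, mul_one]
      rcases mixed hS b p hb hp with ⟨r', hbr', hemix'⟩ | ⟨r', hpr', hemix'⟩ | hemix'
      · -- b = p ++ r'
        have hrg' : GoodW Λ r' := (hbr' ▸ hb).of_append_right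
        have hrr : r' = r := rowP_inj hS hrg' hrg (by rw [← hemix', h5])
        subst hrr
        by_cases hr0 : r' = []
        · subst hr0
          rw [List.append_nil] at har hbr'
          exact ⟨q.length, Set.mem_Iic.mpr le_rfl,
            by rw [har, hbr']; exact hufix.symm⟩
        · exfalso
          have h6 : colQ inv r' * rowP r' = 1 := by
            calc colQ inv r' * rowP r' = colQ inv r' * (rowP b * colQ inv p) := by rw [h5]
              _ = (rowP q * colQ inv a) * (rowP b * colQ inv p) := by rw [hemix]
              _ = 1 := hgrp
          exact colQ_rowP_ne_one hS r' hrg' hr0 h6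
      · -- p = b ++ r'
        have hrg' : GoodW Λ r' := (hpr' ▸ hp).of_append_right
        have hcq : colQ inv r' = rowP r := by rw [← hemix', h5]
        have h7 : rowP (r ++ r') = 1 := by
          rw [rowP_append, ← hcq, rowP_colQ hS hrg']
        have h8 : r ++ r' = [] := rowP_eq_one hS (hrg.append hrg') h7
        obtain ⟨hr0, hr0'⟩ := List.append_eq_nil_iff.mp h8
        subst hr0; subst hr0'
        rw [List.append_nil] at har hpr'
        exact ⟨q.length, Set.mem_Iic.mpr le_rfl,
          by rw [har, ← hpr']; exact hufix.symm⟩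
      · rw [hemix'] at h5
        exact absurd h5.symm (rowP_ne_zero hS hrg)
    · rw [hemix, zero_mul] at hgrp
      exact absurd hgrp hS.zero_ne_one
  have hFibfin : Fib.Finite := ((Set.finite_Iic q.length).image G).subset hFibsub
  have hkey : {colQ inv q * rowP p} = Fib \ (Fib \ {colQ inv q * rowP p}) := by
    ext x
    simp only [Set.mem_singleton_iff, Set.mem_diff]
    constructor
    · rintro rfl
      exact ⟨huFib, fun h => h.2 rfl⟩
    · rintro ⟨hx, hx2⟩
      by_contra hne
      exact hx2 ⟨hx, hne⟩
  rw [hkey]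
  exact hFibo.sdiff ((hFibfin.subset Set.diff_subset).isClosed)

end Topo

end Stmt9Aux

open Stmt9Aux

/-- If the generating set is finite, a compact neighborhood of zero in a
non-discrete locally compact semitopological polycyclic monoid contains all but
finitely many elements of the R-class of the unit. -/
theorem stmt9 {S : Type*} [MonoidWithZero S] (inv : S → S) (Λ : Set S)
    (hS : IsPolycyclicMonoid S inv Λ) (hΛ : Λ.Finite)
    [TopologicalSpace S] [T2Space S] [LocallyCompactSpace S]
    (hl : ∀ a : S, Continuous (fun x : S => a * x))
    (hr : ∀ a : S, Continuous (fun x : S => x * a))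
    (hnd : ¬ DiscreteTopology S)
    (U₀ : Set S) (hU : U₀ ∈ nhds (0 : S)) (hUc : IsCompact U₀) :
    (greenR (1 : S) \ U₀).Finite := by
  classical
  obtain ⟨e, he, f, hf, hef⟩ := exists_two hS
  have hiso : ∀ u : S, u ≠ 0 → IsOpen {u} := fun u hu => isolated_ne_zero hS hl hr hu
  have h0int : (0 : S) ∈ interior U₀ := mem_interior_iff_mem_nhds.mpr hU
  have hcof : ∀ O : Set S, IsOpen O → (0:S) ∈ O → (U₀ \ O).Finite := by
    intro O hO h0O
    have hK : IsCompact (U₀ ∩ Oᶜ) := hUc.inter_right hO.isClosed_compl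
    have hcover : (U₀ ∩ Oᶜ) ⊆ ⋃ i : {x : S // x ≠ 0}, ({i.val} : Set S) := by
      intro x hx
      have hx0 : x ≠ 0 := fun h => hx.2 (h ▸ h0O)
      exact Set.mem_iUnion.mpr ⟨⟨x, hx0⟩, rfl⟩
    obtain ⟨t, ht⟩ := hK.elim_finite_subcover
      (fun i : {x : S // x ≠ 0} => ({i.val} : Set S)) (fun i => hiso i.val i.prop) hcover
    have hfin : (U₀ ∩ Oᶜ).Finite := Set.Finite.subset
      (t.finite_toSet.biUnion fun i _ => Set.finite_singleton i.val) ht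
    rwa [Set.diff_eq]
  have hU₀inf : U₀.Infinite := by
    by_contra hfin
    rw [Set.not_infinite] at hfin
    have h0open : IsOpen {(0:S)} := by
      have heq : {(0:S)} = interior U₀ \ (U₀ \ {0}) := by
        apply Set.Subset.antisymm
        · intro x hx
          rw [Set.mem_singleton_iff] at hx
          subst hx
          exact ⟨h0int, fun h => h.2 rfl⟩
        · rintro x ⟨hxi, hxd⟩
          by_contra hx0
          exact hxd ⟨interior_subset hxi, fun h => hx0 h⟩
      rw [heq]
      exact isOpen_interior.sdiff ((hfin.subset Set.diff_subset).isClosed)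
    have hdisc : DiscreteTopology S := discreteTopology_iff_isOpen_singleton.mpr (by
      intro a
      by_cases ha : a = 0
      · exact ha ▸ h0open
      · exact hiso a ha)
    exact hnd hdisc
  set E : Set S := {x | x ∈ U₀ ∧ ∃ h ∈ Λ, (h * x ∉ interior U₀ ∨ inv h * x ∉ interior U₀ ∨
      x * h ∉ interior U₀ ∨ x * inv h ∉ interior U₀)} with hEdef
  have hpre : ∀ g : S → S, Continuous g → g 0 = 0 → (U₀ \ g ⁻¹' interior U₀).Finite := by
    intro g hg hg0
    apply hcof _ (isOpen_interior.preimage hg)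
    simp only [Set.mem_preimage, hg0]
    exact h0int
  have hEfin : E.Finite := by
    have hsub : E ⊆ ⋃ h ∈ Λ,
        ((U₀ \ (fun x => h * x) ⁻¹' interior U₀) ∪ (U₀ \ (fun x => inv h * x) ⁻¹' interior U₀) ∪
         (U₀ \ (fun x => x * h) ⁻¹' interior U₀) ∪ (U₀ \ (fun x => x * inv h) ⁻¹' interior U₀)) := by
      rintro x ⟨hxU, h, hh, hcase⟩
      refine Set.mem_biUnion hh ?_
      rcases hcase with h1 | h1 | h1 | h1
      · exact Or.inl (Or.inl (Or.inl ⟨hxU, h1⟩))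
      · exact Or.inl (Or.inl (Or.inr ⟨hxU, h1⟩))
      · exact Or.inl (Or.inr ⟨hxU, h1⟩)
      · exact Or.inr ⟨hxU, h1⟩
    refine Set.Finite.subset (Set.Finite.biUnion hΛ fun h _ => ?_) hsub
    exact ((((hpre _ (hl h) (mul_zero h)).union (hpre _ (hl (inv h)) (mul_zero _))).union
      (hpre _ (hr h) (zero_mul h))).union (hpre _ (hr (inv h)) (zero_mul _)))
  have hstep : ∀ x ∈ U₀, x ∉ E → ∀ h ∈ Λ,
      h * x ∈ U₀ ∧ inv h * x ∈ U₀ ∧ x * h ∈ U₀ ∧ x * inv h ∈ U₀ := by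
    intro x hx hxE h hh
    refine ⟨?_, ?_, ?_, ?_⟩
    · by_contra hc
      exact hxE ⟨hx, h, hh, Or.inl (fun hm => hc (interior_subset hm))⟩
    · by_contra hc
      exact hxE ⟨hx, h, hh, Or.inr (Or.inl (fun hm => hc (interior_subset hm)))⟩
    · by_contra hc
      exact hxE ⟨hx, h, hh, Or.inr (Or.inr (Or.inl (fun hm => hc (interior_subset hm))))⟩
    · by_contra hc
      exact hxE ⟨hx, h, hh, Or.inr (Or.inr (Or.inr (fun hm => hc (interior_subset hm))))⟩
  set Bpair : Set (List S × List S) :=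
    {qp | GoodW Λ qp.1 ∧ GoodW Λ qp.2 ∧ colQ inv qp.1 * rowP qp.2 ∈ E} with hBdef
  have hBfin : Bpair.Finite := by
    have hsub : Bpair ⊆ ⋃ x ∈ E, {qp : List S × List S |
        GoodW Λ qp.1 ∧ GoodW Λ qp.2 ∧ colQ inv qp.1 * rowP qp.2 = x} := by
      rintro qp ⟨h1, h2, h3⟩
      exact Set.mem_biUnion h3 ⟨h1, h2, rfl⟩
    refine Set.Finite.subset (hEfin.biUnion fun x _ => Set.Subsingleton.finite ?_) hsub
    rintro ⟨q1, p1⟩ ⟨g1, g2, g3⟩ ⟨q2, p2⟩ ⟨k1, k2, k3⟩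
    obtain ⟨hh1, hh2⟩ := elem_inj hS g1 g2 k1 k2 (g3.trans k3.symm)
    rw [Prod.mk.injEq]
    exact ⟨hh1, hh2⟩
  have hBRfin : (Prod.snd '' Bpair).Finite := hBfin.image _
  have hBCfin : (Prod.fst '' Bpair).Finite := hBfin.image _
  obtain ⟨N, hNR, hNC⟩ : ∃ N : ℕ, (∀ l ∈ Prod.snd '' Bpair, l.length < N) ∧
      (∀ l ∈ Prod.fst '' Bpair, l.length < N) := by
    obtain ⟨N1, hN1⟩ := (hBRfin.image List.length).bddAbove
    obtain ⟨N2, hN2⟩ := (hBCfin.image List.length).bddAbove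
    refine ⟨max N1 N2 + 1, fun l hli => ?_, fun l hli => ?_⟩
    · have h1 : l.length ≤ N1 := hN1 (Set.mem_image_of_mem _ hli)
      have := le_max_left N1 N2
      omega
    · have h1 : l.length ≤ N2 := hN2 (Set.mem_image_of_mem _ hli)
      have := le_max_right N1 N2
      omega
  have hErow : ∀ q p, GoodW Λ q → GoodW Λ p → colQ inv q * rowP p ∈ E →
      p ∈ Prod.snd '' Bpair ∧ q ∈ Prod.fst '' Bpair := by
    intro q p hq hp hmem
    exact ⟨⟨(q,p), ⟨hq, hp, hmem⟩, rfl⟩, ⟨(q,p), ⟨hq, hp, hmem⟩, rfl⟩⟩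
  have hrepGood : ∀ m : ℕ, GoodW Λ (List.replicate m e) :=
    fun m x hx => (List.eq_of_mem_replicate hx) ▸ he
  have chainA : ∀ q : List S, GoodW Λ q → ∀ p, GoodW Λ p → p ∉ Prod.snd '' Bpair →
      colQ inv q * rowP p ∈ U₀ → rowP p ∈ U₀ := by
    intro q
    induction q with
    | nil =>
      intro _ p _ _ hx
      rw [colQ_nil, one_mul] at hx
      exact hx
    | cons c q' ih =>
      intro hq p hp hpb hx
      obtain ⟨hc, hq'⟩ := hq.of_cons
      have hxE : colQ inv (c :: q') * rowP p ∉ E := fun hmem => hpb (hErow _ _ hq hp hmem).1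
      have hst := (hstep _ hx hxE c hc).1
      have heq : c * (colQ inv (c :: q') * rowP p) = colQ inv q' * rowP p := by
        rw [colQ_cons]
        simp only [← mul_assoc]
        rw [hS.gen_unit c hc, one_mul]
      rw [heq] at hst
      exact ih hq' p hp hpb hst
  have chainB : ∀ m : ℕ, ∀ p, GoodW Λ p → p ∉ Prod.snd '' Bpair → rowP p ∈ U₀ →
      colQ inv (List.replicate m e) * rowP p ∈ U₀ := by
    intro m
    induction m with
    | zero =>
      intro p _ _ hx
      rw [List.replicate_zero, colQ_nil, one_mul]
      exact hx
    | succ m ih =>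
      intro p hp hpb hx
      have hy := ih p hp hpb hx
      have hyE : colQ inv (List.replicate m e) * rowP p ∉ E :=
        fun hmem => hpb (hErow _ _ (hrepGood m) hp hmem).1
      have hst := (hstep _ hy hyE e he).2.1
      have heq : inv e * (colQ inv (List.replicate m e) * rowP p)
          = colQ inv (List.replicate (m+1) e) * rowP p := by
        rw [List.replicate_succ, colQ_cons, mul_assoc]
      rw [heq] at hst
      exact hst
  have hsafe : ∀ u, GoodW Λ u → colQ inv (List.replicate N e) * rowP u ∉ E := by
    intro u hu hmem
    have h1 := (hErow _ _ (hrepGood N) hu hmem).2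
    have hlen := hNC _ h1
    rw [List.length_replicate] at hlen
    omega
  have chainC : ∀ p, GoodW Λ p → colQ inv (List.replicate N e) * rowP p ∈ U₀ →
      colQ inv (List.replicate N e) ∈ U₀ := by
    intro p
    induction p with
    | nil =>
      intro _ hx
      rw [rowP_nil, mul_one] at hx
      exact hx
    | cons c p' ih =>
      intro hp hx
      obtain ⟨hc, hp'⟩ := hp.of_cons
      have hst := (hstep _ hx (hsafe _ hp) c hc).2.2.2
      have heq : (colQ inv (List.replicate N e) * rowP (c :: p')) * inv c
          = colQ inv (List.replicate N e) * rowP p' := by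
        rw [rowP_cons, mul_assoc, mul_assoc, hS.gen_unit c hc, mul_one]
      rw [heq] at hst
      exact ih hp' hst
  have chainD : ∀ w, GoodW Λ w → colQ inv (List.replicate N e) ∈ U₀ →
      colQ inv (List.replicate N e) * rowP w ∈ U₀ := by
    intro w
    induction w with
    | nil =>
      intro _ hx
      rw [rowP_nil, mul_one]
      exact hx
    | cons c w' ih =>
      intro hw hx
      obtain ⟨hc, hw'⟩ := hw.of_cons
      have hy := ih hw' hx
      have hst := (hstep _ hy (hsafe _ hw') c hc).2.2.1
      have heq : (colQ inv (List.replicate N e) * rowP w') * c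
          = colQ inv (List.replicate N e) * rowP (c :: w') := by
        rw [rowP_cons, mul_assoc]
      rw [heq] at hst
      exact hst
  set BadStart : Set S := {y | y ≠ 0 ∧ ∃ t ≤ N, y * rowP (List.replicate t e) ∈ E} with hBS
  have hBSfin : BadStart.Finite := by
    have hsub : BadStart ⊆ ⋃ t ∈ Set.Iic N, ⋃ x ∈ E,
        {y : S | y ≠ 0 ∧ y * rowP (List.replicate t e) = x} := by
      rintro y ⟨hy0, t, ht, hmem⟩
      exact Set.mem_biUnion (Set.mem_Iic.mpr ht) (Set.mem_biUnion hmem ⟨hy0, rfl⟩)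
    refine Set.Finite.subset (Set.Finite.biUnion (Set.finite_Iic N) fun t _ =>
      Set.Finite.biUnion hEfin fun x _ => Set.Subsingleton.finite ?_) hsub
    rintro y1 ⟨hy1, he1⟩ y2 ⟨hy2, he2⟩
    rcases normal_form hS y1 with rfl | ⟨a1, b1, ha1, hb1, rfl⟩
    · exact absurd rfl hy1
    rcases normal_form hS y2 with rfl | ⟨a2, b2, ha2, hb2, rfl⟩
    · exact absurd rfl hy2
    have hmul : ∀ (a b : List S), (colQ inv a * rowP b) * rowP (List.replicate t e)
        = colQ inv a * rowP (List.replicate t e ++ b) := by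
      intro a b
      rw [rowP_append, mul_assoc]
    rw [hmul] at he1 he2
    obtain ⟨hqe, hpe⟩ := elem_inj hS ha1 ((hrepGood t).append hb1) ha2 ((hrepGood t).append hb2)
      (he1.trans he2.symm)
    have hbe : b1 = b2 := List.append_cancel_left hpe
    rw [hqe, hbe]
  obtain ⟨x₀, hx₀U, hx₀n⟩ := (hU₀inf.diff (hBSfin.union (Set.finite_singleton 0))).nonempty
  have hx₀0 : x₀ ≠ 0 := fun h => hx₀n (Or.inr (Set.mem_singleton_iff.mpr h))
  have seedchain : ∀ t, t ≤ N → x₀ * rowP (List.replicate t e) ∈ U₀ := by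
    intro t
    induction t with
    | zero =>
      intro _
      rw [List.replicate_zero, rowP_nil, mul_one]
      exact hx₀U
    | succ t ih =>
      intro ht
      have hy := ih (Nat.le_of_succ_le ht)
      have hyE : x₀ * rowP (List.replicate t e) ∉ E := by
        intro hmem
        exact hx₀n (Or.inl ⟨hx₀0, t, Nat.le_of_succ_le ht, hmem⟩)
      have hst := (hstep _ hy hyE e he).2.2.1
      have heq : (x₀ * rowP (List.replicate t e)) * e = x₀ * rowP (List.replicate (t+1) e) := by
        rw [List.replicate_succ, rowP_cons, mul_assoc]
      rw [heq] at hst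
      exact hst
  have hyN := seedchain N le_rfl
  rcases normal_form hS x₀ with h0' | ⟨q0, b0, hq0, hb0, hx0eq⟩
  · exact absurd h0' hx₀0
  have hyN' : colQ inv q0 * rowP (List.replicate N e ++ b0) ∈ U₀ := by
    rw [rowP_append, ← mul_assoc, ← hx0eq]
    exact hyN
  have hp0Good : GoodW Λ (List.replicate N e ++ b0) := (hrepGood N).append hb0
  have hp0bad : (List.replicate N e ++ b0) ∉ Prod.snd '' Bpair := by
    intro hmem
    have h1 := hNR _ hmem
    rw [List.length_append, List.length_replicate] at h1
    omega
  have main : ∀ w, GoodW Λ w → w ∉ Prod.snd '' Bpair → rowP w ∈ U₀ := by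
    intro w hw hwb
    have s1 := chainA q0 hq0 _ hp0Good hp0bad hyN'
    have s2 := chainB N _ hp0Good hp0bad s1
    have s3 := chainC _ hp0Good s2
    have s4 := chainD w hw s3
    exact chainA (List.replicate N e) (hrepGood N) w hw hwb s4
  have hfinal : (greenR (1:S) \ U₀) ⊆ rowP '' (Prod.snd '' Bpair) := by
    intro x hx
    obtain ⟨w, hw, rfl⟩ := greenR_one_sub hS hx.1
    by_cases hwb : w ∈ Prod.snd '' Bpair
    · exact ⟨w, hwb, rfl⟩
    · exact absurd (main w hw hwb) hx.2
  exact (hBRfin.image rowP).subset hfinal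
end
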